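/- arXiv:2306.12803 — 10 statements merged into one kernel-verified Lean document; each statement's English description precedes it below -/
import Mathlib

section
/- Let 𝒜 = [Z, R₁, R₂] be a consistent bounded preference system on a finite set Z = {z₁,…,z_s} with minimal element z₁ and maximal element z₂, and let C be the associated constraint set. Then the supremum sup{ξ ∈ [0,1) : 𝒩^ξ_𝒜 ≠ ∅} equals the maximal value ξ* of the last coordinate ξ over all (v₁,…,v_s,ξ) ∈ C, and this maximum is attained; consequently, for every ε ∈ [0,1], ε · sup{ξ : 𝒩^ξ_𝒜 ≠ ∅} = ε·ξ*. -/
open MeasureTheory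
open scoped BigOperators

namespace GSD

/-- The strict part `P_R` of a binary relation `R`. -/
def strictPart {α : Type*} (R : α → α → Prop) (a b : α) : Prop := R a b ∧ ¬ R b a

/-- The indifference part `I_R` of a binary relation `R`. -/
def indiffPart {α : Type*} (R : α → α → Prop) (a b : α) : Prop := R a b ∧ R b a

/-- `[A, R1, R2]` is a preference system: `R1` is a preorder on `A` and `R2` is a preorder
on `R1` (i.e. a reflexive-transitive relation supported on pairs belonging to `R1`). -/
structure IsPrefSystem {A : Type*} (R1 : A → A → Prop) (R2 : A × A → A × A → Prop) : Prop where
  refl1 : ∀ a, R1 a a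
  trans1 : ∀ a b c, R1 a b → R1 b c → R1 a c
  sub2 : ∀ p q, R2 p q → R1 p.1 p.2 ∧ R1 q.1 q.2
  refl2 : ∀ p, R1 p.1 p.2 → R2 p p
  trans2 : ∀ p q r, R2 p q → R2 q r → R2 p r

/-- `u` is a representation of the preference system `[A, R1, R2]`. -/
def IsRepresentation {A : Type*} (R1 : A → A → Prop) (R2 : A × A → A × A → Prop)
    (u : A → ℝ) : Prop :=
  (∀ a b, R1 a b → (u b ≤ u a ∧ (u a = u b ↔ R1 b a))) ∧
  (∀ a b c d, R2 (a, b) (c, d) →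
    (u c - u d ≤ u a - u b ∧ (u a - u b = u c - u d ↔ R2 (c, d) (a, b))))

/-- A preference system is consistent if it admits a representation. -/
def Consistent {A : Type*} (R1 : A → A → Prop) (R2 : A × A → A × A → Prop) : Prop :=
  ∃ u, IsRepresentation R1 R2 u

/-- The preference system is bounded with minimal element `a0` and maximal element `a1`. -/
def Bounded {A : Type*} (R1 : A → A → Prop) (a0 a1 : A) : Prop :=
  (∀ a, R1 a1 a) ∧ (∀ a, R1 a a0) ∧ strictPart R1 a1 a0

/-- Membership in the normalized representation set `𝒩_𝒜`. -/
def NormRep {A : Type*} (R1 : A → A → Prop) (R2 : A × A → A × A → Prop) (a0 a1 : A)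
    (u : A → ℝ) : Prop :=
  IsRepresentation R1 R2 u ∧ u a0 = 0 ∧ u a1 = 1

/-- Membership in `𝒩^δ_𝒜`: normalized representations separating strict pairs by at least `δ`. -/
def NormRepDelta {A : Type*} (R1 : A → A → Prop) (R2 : A × A → A × A → Prop) (a0 a1 : A)
    (δ : ℝ) (u : A → ℝ) : Prop :=
  NormRep R1 R2 a0 a1 u ∧
  (∀ a b, strictPart R1 a b → δ ≤ u a - u b) ∧
  (∀ c d e f, strictPart R2 (c, d) (e, f) → δ ≤ u c - u d - u e + u f)

/-- The constraint set `C` of vectors `(v₁,…,v_s,ξ) ∈ [0,1]^{s+1}`. -/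
def ConstraintSet {s : ℕ} (R1 : Fin s → Fin s → Prop)
    (R2 : (Fin s × Fin s) → (Fin s × Fin s) → Prop) (a0 a1 : Fin s) :
    Set ((Fin s → ℝ) × ℝ) :=
  {w | (∀ i, w.1 i ∈ Set.Icc (0:ℝ) 1) ∧ w.2 ∈ Set.Icc (0:ℝ) 1 ∧
    w.1 a0 = 0 ∧ w.1 a1 = 1 ∧
    (∀ i j, indiffPart R1 i j → w.1 i = w.1 j) ∧
    (∀ i j, strictPart R1 i j → w.2 ≤ w.1 i - w.1 j) ∧
    (∀ k l r t, indiffPart R2 (k, l) (r, t) → w.1 k - w.1 l = w.1 r - w.1 t) ∧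
    (∀ k l r t, strictPart R2 (k, l) (r, t) → w.2 ≤ w.1 k - w.1 l - w.1 r + w.1 t)}

/-- The slice `C_{ξ₀}` of the constraint set at threshold `ξ₀`. -/
def ConstraintSetAt {s : ℕ} (R1 : Fin s → Fin s → Prop)
    (R2 : (Fin s × Fin s) → (Fin s × Fin s) → Prop) (a0 a1 : Fin s) (ξ0 : ℝ) :
    Set (Fin s → ℝ) :=
  {v | (v, ξ0) ∈ ConstraintSet R1 R2 a0 a1}

/-- `p` is a probability mass function on `Fin s` (with values in `[0,1]`). -/
def IsPMF {s : ℕ} (p : Fin s → ℝ) : Prop :=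
  (∀ i, p i ∈ Set.Icc (0:ℝ) 1) ∧ ∑ i, p i = 1


section Aux

variable {s : ℕ} {R1 : Fin s → Fin s → Prop} {R2 : (Fin s × Fin s) → (Fin s × Fin s) → Prop}

lemma rep_strict1 {u : Fin s → ℝ} (hu : IsRepresentation R1 R2 u) {a b : Fin s}
    (h : strictPart R1 a b) : u b < u a := by
  obtain ⟨h1, h2⟩ := hu.1 a b h.1
  rcases h1.lt_or_eq with h' | h'
  · exact h'
  · exact absurd (h2.mp h'.symm) h.2

lemma rep_strict2 {u : Fin s → ℝ} (hu : IsRepresentation R1 R2 u) {a b c d : Fin s}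
    (h : strictPart R2 (a, b) (c, d)) : u c - u d < u a - u b := by
  obtain ⟨h1, h2⟩ := hu.2 a b c d h.1
  rcases h1.lt_or_eq with h' | h'
  · exact h'
  · exact absurd (h2.mp h'.symm) h.2

lemma aux_isClosed (a0 a1 : Fin s) : IsClosed (ConstraintSet R1 R2 a0 a1) := by
  classical
  have hc1 : ∀ i : Fin s, Continuous fun w : (Fin s → ℝ) × ℝ => w.1 i :=
    fun i => (continuous_apply i).comp continuous_fst
  unfold ConstraintSet
  simp only [Set.setOf_and]
  refine IsClosed.inter ?_ (IsClosed.inter ?_ (IsClosed.inter ?_ (IsClosed.inter ?_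
    (IsClosed.inter ?_ (IsClosed.inter ?_ (IsClosed.inter ?_ ?_))))))
  · rw [Set.setOf_forall]
    exact isClosed_iInter fun i => isClosed_Icc.preimage (hc1 i)
  · exact isClosed_Icc.preimage continuous_snd
  · exact isClosed_eq (hc1 a0) continuous_const
  · exact isClosed_eq (hc1 a1) continuous_const
  · rw [Set.setOf_forall]; refine isClosed_iInter fun i => ?_
    rw [Set.setOf_forall]; refine isClosed_iInter fun j => ?_
    by_cases h : indiffPart R1 i j
    · have he : {w : (Fin s → ℝ) × ℝ | indiffPart R1 i j → w.1 i = w.1 j}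
          = {w | w.1 i = w.1 j} := by ext w; simp [h]
      rw [he]; exact isClosed_eq (hc1 i) (hc1 j)
    · have he : {w : (Fin s → ℝ) × ℝ | indiffPart R1 i j → w.1 i = w.1 j}
          = Set.univ := by ext w; simp [h]
      rw [he]; exact isClosed_univ
  · rw [Set.setOf_forall]; refine isClosed_iInter fun i => ?_
    rw [Set.setOf_forall]; refine isClosed_iInter fun j => ?_
    by_cases h : strictPart R1 i j
    · have he : {w : (Fin s → ℝ) × ℝ | strictPart R1 i j → w.2 ≤ w.1 i - w.1 j}
          = {w | w.2 ≤ w.1 i - w.1 j} := by ext w; simp [h]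
      rw [he]; exact isClosed_le continuous_snd ((hc1 i).sub (hc1 j))
    · have he : {w : (Fin s → ℝ) × ℝ | strictPart R1 i j → w.2 ≤ w.1 i - w.1 j}
          = Set.univ := by ext w; simp [h]
      rw [he]; exact isClosed_univ
  · rw [Set.setOf_forall]; refine isClosed_iInter fun k => ?_
    rw [Set.setOf_forall]; refine isClosed_iInter fun l => ?_
    rw [Set.setOf_forall]; refine isClosed_iInter fun r => ?_
    rw [Set.setOf_forall]; refine isClosed_iInter fun t => ?_
    by_cases h : indiffPart R2 (k, l) (r, t)
    · have he : {w : (Fin s → ℝ) × ℝ | indiffPart R2 (k, l) (r, t) →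
          w.1 k - w.1 l = w.1 r - w.1 t} = {w | w.1 k - w.1 l = w.1 r - w.1 t} := by
        ext w; simp [h]
      rw [he]; exact isClosed_eq ((hc1 k).sub (hc1 l)) ((hc1 r).sub (hc1 t))
    · have he : {w : (Fin s → ℝ) × ℝ | indiffPart R2 (k, l) (r, t) →
          w.1 k - w.1 l = w.1 r - w.1 t} = Set.univ := by ext w; simp [h]
      rw [he]; exact isClosed_univ
  · rw [Set.setOf_forall]; refine isClosed_iInter fun k => ?_
    rw [Set.setOf_forall]; refine isClosed_iInter fun l => ?_
    rw [Set.setOf_forall]; refine isClosed_iInter fun r => ?_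
    rw [Set.setOf_forall]; refine isClosed_iInter fun t => ?_
    by_cases h : strictPart R2 (k, l) (r, t)
    · have he : {w : (Fin s → ℝ) × ℝ | strictPart R2 (k, l) (r, t) →
          w.2 ≤ w.1 k - w.1 l - w.1 r + w.1 t}
          = {w | w.2 ≤ w.1 k - w.1 l - w.1 r + w.1 t} := by ext w; simp [h]
      rw [he]
      exact isClosed_le continuous_snd ((((hc1 k).sub (hc1 l)).sub (hc1 r)).add (hc1 t))
    · have he : {w : (Fin s → ℝ) × ℝ | strictPart R2 (k, l) (r, t) →
          w.2 ≤ w.1 k - w.1 l - w.1 r + w.1 t} = Set.univ := by ext w; simp [h]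
      rw [he]; exact isClosed_univ

end Aux

/-- Proposition 3: the maximal regularization threshold `ξ*` over the constraint set `C`
is attained and equals `sup{ξ ∈ [0,1) : 𝒩^ξ_𝒜 ≠ ∅}`; hence `δ_ε = ε·ξ*`. -/
theorem stmt4 {s : ℕ} (R1 : Fin s → Fin s → Prop)
    (R2 : (Fin s × Fin s) → (Fin s × Fin s) → Prop) (a0 a1 : Fin s)
    (hps : IsPrefSystem R1 R2) (hcons : Consistent R1 R2) (hbd : Bounded R1 a0 a1) :
    ∃ ξstar : ℝ,
      IsGreatest {ξ | ∃ v, (v, ξ) ∈ ConstraintSet R1 R2 a0 a1} ξstar ∧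
      sSup {ξ | ξ ∈ Set.Ico (0:ℝ) 1 ∧ ∃ u, NormRepDelta R1 R2 a0 a1 ξ u} = ξstar ∧
      ∀ ε ∈ Set.Icc (0:ℝ) 1,
        ε * sSup {ξ | ξ ∈ Set.Ico (0:ℝ) 1 ∧ ∃ u, NormRepDelta R1 R2 a0 a1 ξ u}
          = ε * ξstar := by
  classical
  obtain ⟨u, hu⟩ := hcons
  obtain ⟨hmaxel, hminel, hstr⟩ := hbd
  have h10 : u a0 < u a1 := rep_strict1 hu hstr
  set c : ℝ := u a1 - u a0 with hcdef
  have hc : 0 < c := sub_pos.mpr h10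
  set v0 : Fin s → ℝ := fun a => (u a - u a0) / c with hv0
  have hdiff : ∀ a b, v0 a - v0 b = (u a - u b) / c := by
    intro a b; simp only [hv0]; ring
  have hle : ∀ x y : ℝ, x / c ≤ y / c ↔ x ≤ y := fun x y => div_le_div_iff_of_pos_right hc
  have heqc : ∀ x y : ℝ, x / c = y / c ↔ x = y := by
    intro x y
    constructor
    · intro h
      have := mul_right_cancel₀ (inv_ne_zero hc.ne') (by
        simpa [div_eq_mul_inv] using h)
      exact this
    · intro h; rw [h]
  have hv0rep : IsRepresentation R1 R2 v0 := by
    constructor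
    · intro a b hab
      obtain ⟨h1, h2⟩ := hu.1 a b hab
      constructor
      · simp only [hv0]
        exact (hle _ _).mpr (by linarith)
      · rw [← h2]
        simp only [hv0]
        constructor
        · intro h; have := (heqc _ _).mp h; linarith
        · intro h; rw [show u a = u b from by linarith]
    · intro a b cc d h2
      obtain ⟨h1, hiff⟩ := hu.2 a b cc d h2
      constructor
      · rw [hdiff, hdiff]; exact (hle _ _).mpr h1
      · rw [← hiff, hdiff, hdiff]; exact heqc _ _
  have hv0a0 : v0 a0 = 0 := by simp [hv0]
  have hv0a1 : v0 a1 = 1 := by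
    simp only [hv0, ← hcdef]
    exact div_self hc.ne'
  -- membership lemma for the constraint set
  have hmemC : ∀ (w : Fin s → ℝ) (ξ : ℝ), IsRepresentation R1 R2 w → w a0 = 0 → w a1 = 1 →
      0 ≤ ξ → ξ ≤ 1 → (∀ a b, strictPart R1 a b → ξ ≤ w a - w b) →
      (∀ a b cc d, strictPart R2 (a, b) (cc, d) → ξ ≤ w a - w b - w cc + w d) →
      (w, ξ) ∈ ConstraintSet R1 R2 a0 a1 := by
    intro w ξ hrep h0 h1 hξ0 hξ1 hs1 hs2
    refine ⟨?_, ⟨hξ0, hξ1⟩, h0, h1, ?_, hs1, ?_, hs2⟩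
    · intro i
      constructor
      · have := (hrep.1 i a0 (hminel i)).1; linarith
      · have := (hrep.1 a1 i (hmaxel i)).1; linarith
    · intro i j hij; exact (hrep.1 i j hij.1).2.mpr hij.2
    · intro k l r t h; exact (hrep.2 k l r t h.1).2.mpr h.2
  have hC0 : (v0, (0:ℝ)) ∈ ConstraintSet R1 R2 a0 a1 := by
    refine hmemC v0 0 hv0rep hv0a0 hv0a1 le_rfl zero_le_one ?_ ?_
    · intro a b h; have := rep_strict1 hv0rep h; linarith
    · intro a b cc d h; have := rep_strict2 hv0rep h; linarith
  -- compactness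
  have hsubK : ConstraintSet R1 R2 a0 a1 ⊆
      (Set.univ.pi fun _ : Fin s => Set.Icc (0:ℝ) 1) ×ˢ Set.Icc (0:ℝ) 1 := by
    rintro ⟨v, ξ⟩ ⟨h1, h2, -⟩
    exact ⟨fun i _ => h1 i, h2⟩
  have hcomp : IsCompact (ConstraintSet R1 R2 a0 a1) :=
    IsCompact.of_isClosed_subset
      ((isCompact_univ_pi fun _ => isCompact_Icc).prod isCompact_Icc)
      (aux_isClosed a0 a1) hsubK
  have hTcomp : IsCompact (Prod.snd '' ConstraintSet R1 R2 a0 a1) :=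
    hcomp.image continuous_snd
  obtain ⟨ξstar, hgr⟩ := hTcomp.exists_isGreatest ⟨0, (v0, 0), hC0, rfl⟩
  have hTeq : {ξ | ∃ v, (v, ξ) ∈ ConstraintSet R1 R2 a0 a1}
      = Prod.snd '' ConstraintSet R1 R2 a0 a1 := by
    ext ξ
    constructor
    · rintro ⟨v, hv⟩; exact ⟨(v, ξ), hv, rfl⟩
    · rintro ⟨⟨v, ξ'⟩, hv, rfl⟩; exact ⟨v, hv⟩
  obtain ⟨wbar, hwCb, hweq⟩ := hgr.1
  have hwC' : (wbar.1, ξstar) ∈ ConstraintSet R1 R2 a0 a1 := by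
    rw [← hweq]; exact hwCb
  set wv : Fin s → ℝ := wbar.1 with hwv
  obtain ⟨hB, hξI, hw0, hw1, hind1, hstr1, hind2, hstr2⟩ := hwC'
  dsimp only at hB hξI hw0 hw1 hind1 hstr1 hind2 hstr2
  set S : Set ℝ := {ξ | ξ ∈ Set.Ico (0:ℝ) 1 ∧ ∃ u, NormRepDelta R1 R2 a0 a1 ξ u} with hS
  have h0S : (0:ℝ) ∈ S := by
    refine ⟨⟨le_rfl, zero_lt_one⟩, v0, ⟨⟨hv0rep, hv0a0, hv0a1⟩, ?_, ?_⟩⟩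
    · intro a b h; have := rep_strict1 hv0rep h; linarith
    · intro a b cc d h; have := rep_strict2 hv0rep h; linarith
  have hub : ∀ ξ ∈ S, ξ ≤ ξstar := by
    rintro ξ ⟨⟨hξ0, hξ1⟩, w, ⟨⟨hrep, h0, h1⟩, hs1, hs2⟩⟩
    have hmem : (w, ξ) ∈ ConstraintSet R1 R2 a0 a1 :=
      hmemC w ξ hrep h0 h1 hξ0 hξ1.le hs1 (fun a b cc d h => hs2 a b cc d h)
    exact hgr.2 ⟨(w, ξ), hmem, rfl⟩
  have hSbdd : BddAbove S := ⟨ξstar, hub⟩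
  have hξ0' : 0 ≤ ξstar := hξI.1
  have hξ1' : ξstar ≤ 1 := hξI.2
  have hlb : ∀ t : ℝ, 0 < t → t < 1 → t * ξstar ∈ S := by
    intro t ht0 ht1
    set wt : Fin s → ℝ := fun a => t * wv a + (1 - t) * v0 a with hwt
    have hdd : ∀ a b : Fin s,
        wt a - wt b = t * (wv a - wv b) + (1 - t) * (v0 a - v0 b) := by
      intro a b; simp only [hwt]; ring
    have hdd2 : ∀ a b cc d : Fin s, wt a - wt b - wt cc + wt d
        = t * (wv a - wv b - wv cc + wv d) + (1 - t) * (v0 a - v0 b - v0 cc + v0 d) := by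
      intro a b cc d; simp only [hwt]; ring
    have hwtrep : IsRepresentation R1 R2 wt := by
      constructor
      · intro a b hab
        by_cases hba : R1 b a
        · have e1 : wv a = wv b := hind1 a b ⟨hab, hba⟩
          have e2 : v0 a = v0 b := (hv0rep.1 a b hab).2.mpr hba
          constructor
          · simp [hwt, e1, e2]
          · simp [hwt, e1, e2, hba]
        · have s1 : ξstar ≤ wv a - wv b := hstr1 a b ⟨hab, hba⟩
          have s2 : v0 b < v0 a := rep_strict1 hv0rep ⟨hab, hba⟩
          have hlt : wt b < wt a := by
            have e := hdd a b
            have p1 : 0 ≤ t * (wv a - wv b) := mul_nonneg ht0.le (by linarith)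
            have p2 : 0 < (1 - t) * (v0 a - v0 b) :=
              mul_pos (by linarith) (by linarith)
            linarith
          exact ⟨hlt.le, iff_of_false hlt.ne' hba⟩
      · intro a b cc d h2
        by_cases hr : R2 (cc, d) (a, b)
        · have e1 : wv a - wv b = wv cc - wv d := hind2 a b cc d ⟨h2, hr⟩
          have e2 : v0 a - v0 b = v0 cc - v0 d := (hv0rep.2 a b cc d h2).2.mpr hr
          have e3 : wt a - wt b = wt cc - wt d := by
            rw [hdd a b, hdd cc d, e1, e2]
          exact ⟨e3.ge, ⟨fun _ => hr, fun _ => e3⟩⟩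
        · have s1 : ξstar ≤ wv a - wv b - wv cc + wv d := hstr2 a b cc d ⟨h2, hr⟩
          have s2 : v0 cc - v0 d < v0 a - v0 b := rep_strict2 hv0rep ⟨h2, hr⟩
          have hlt : wt cc - wt d < wt a - wt b := by
            have e := hdd2 a b cc d
            have p1 : 0 ≤ t * (wv a - wv b - wv cc + wv d) :=
              mul_nonneg ht0.le (by linarith)
            have p2 : 0 < (1 - t) * (v0 a - v0 b - v0 cc + v0 d) :=
              mul_pos (by linarith) (by linarith)
            linarith
          refine ⟨hlt.le, ⟨fun hh => absurd hh hlt.ne', fun hh => absurd hh hr⟩⟩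
    refine ⟨⟨mul_nonneg ht0.le hξ0', ?_⟩, wt, ⟨⟨hwtrep, ?_, ?_⟩, ?_, ?_⟩⟩
    · calc t * ξstar ≤ t * 1 := mul_le_mul_of_nonneg_left hξ1' ht0.le
        _ = t := mul_one t
        _ < 1 := ht1
    · show t * wv a0 + (1 - t) * v0 a0 = 0
      rw [hw0, hv0a0]; ring
    · show t * wv a1 + (1 - t) * v0 a1 = 1
      rw [hw1, hv0a1]; ring
    · intro a b h
      have s1 : ξstar ≤ wv a - wv b := hstr1 a b h
      have s2 : v0 b < v0 a := rep_strict1 hv0rep h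
      have e := hdd a b
      have p1 : t * ξstar ≤ t * (wv a - wv b) := mul_le_mul_of_nonneg_left s1 ht0.le
      have p2 : 0 ≤ (1 - t) * (v0 a - v0 b) :=
        mul_nonneg (by linarith) (by linarith)
      linarith
    · intro a b cc d h
      have s1 : ξstar ≤ wv a - wv b - wv cc + wv d := hstr2 a b cc d h
      have s2 : v0 cc - v0 d < v0 a - v0 b := rep_strict2 hv0rep h
      have e := hdd2 a b cc d
      have p1 : t * ξstar ≤ t * (wv a - wv b - wv cc + wv d) :=
        mul_le_mul_of_nonneg_left s1 ht0.le
      have p2 : 0 ≤ (1 - t) * (v0 a - v0 b - v0 cc + v0 d) :=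
        mul_nonneg (by linarith) (by linarith)
      linarith
  have hsup : sSup S = ξstar := by
    have h1 : sSup S ≤ ξstar := csSup_le ⟨0, h0S⟩ hub
    have hnn : 0 ≤ sSup S := le_csSup hSbdd h0S
    have h2 : ξstar ≤ sSup S := by
      refine le_of_forall_pos_le_add ?_
      intro ε hε
      by_cases hεb : ξstar ≤ ε
      · linarith
      · push_neg at hεb
        have hξpos : 0 < ξstar := lt_trans hε hεb
        have hq1 : ε / ξstar < 1 := (div_lt_one hξpos).mpr hεb
        have hq0 : 0 < ε / ξstar := div_pos hε hξpos
        have hmem := hlb (1 - ε / ξstar) (by linarith) (by linarith)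
        have hle' : (1 - ε / ξstar) * ξstar ≤ sSup S := le_csSup hSbdd hmem
        have hval : (1 - ε / ξstar) * ξstar = ξstar - ε := by
          field_simp
        linarith
    linarith
  refine ⟨ξstar, ?_, hsup, fun ε _ => by rw [hsup]⟩
  rw [hTeq]
  exact hgr


end GSD
end

section
/- Let 𝒜 = [Z, R₁, R₂] be a consistent bounded preference system on a finite set Z = {z₁,…,z_s} with minimal element z₁ and maximal element z₂, let p, q : Z → [0,1] be probability mass functions on Z, let ξ* be the maximal value of ξ over C, and let ε ∈ [0,1]. Then the infimum over u ∈ 𝒩^{ε·ξ*}_𝒜 of Σ_{ℓ=1}^{s} u(z_ℓ)·(p(z_ℓ) − q(z_ℓ)) equals the minimum over (v₁,…,v_s) ∈ C_{ε·ξ*} of Σ_{ℓ=1}^{s} v_ℓ·(p(z_ℓ) − q(z_ℓ)), and this minimum is attained. -/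
open MeasureTheory
open scoped BigOperators

/-!
`C_δ` is a compact polytope, so the linear objective attains its minimum over it at some `v`.
Normalising a representation and taking its smallest strict gap gives a point of `C` with positive
threshold, so `ξ* > 0`, and a `w` with `(w, ξ*) ∈ C` has all strict gaps positive. Since `C` is
convex, every point of the segment from `v` to `w` other than `v` has gaps at least `δ` and
strictly positive, hence lies in `𝒩^δ ⊆ C_δ`; letting it tend to `v` shows that the infimum over
`𝒩^δ` is the minimum over `C_δ`.
-/

namespace GSD

theorem csInf_image_eq_of_isMinOn_of_mem_closure {X β : Type*} [TopologicalSpace X]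
    [ConditionallyCompleteLinearOrder β] [TopologicalSpace β] [OrderClosedTopology β]
    {f : X → β} (hf : Continuous f) {S T : Set X} {x : X} (hST : S ⊆ T)
    (hx : IsMinOn f T x) (hxS : x ∈ closure S) : sInf (f '' S) = f x := by
  refine IsGLB.csInf_eq ⟨?_, fun b hb => ?_⟩ ((closure_nonempty_iff.mp ⟨x, hxS⟩).image f)
  · rintro _ ⟨y, hy, rfl⟩
    exact hx (hST hy)
  · have hS : S ⊆ {y | b ≤ f y} := fun y hy => hb ⟨y, hy, rfl⟩
    exact closure_minimal hS (isClosed_le continuous_const hf) hxS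

theorem exists_pos_forall_le_of_finite {ι : Type*} [Finite ι] {P : ι → Prop} {f : ι → ℝ}
    (hf : ∀ i, P i → 0 < f i) : ∃ δ > 0, ∀ i, P i → δ ≤ f i := by
  rcases {i | P i}.eq_empty_or_nonempty with hP | hP
  · exact ⟨1, one_pos, fun i hi => absurd hi (Set.eq_empty_iff_forall_notMem.mp hP i)⟩
  · obtain ⟨i, hi, hmin⟩ := Set.exists_min_image _ f (Set.toFinite _) hP
    exact ⟨f i, hf i hi, hmin⟩

section Representation

variable {A : Type*} {R1 : A → A → Prop} {R2 : A × A → A × A → Prop} {a0 a1 : A}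
  {u : A → ℝ}

private theorem le_and_eq_iff_iff {x y : ℝ} {Q : Prop} :
    (x ≤ y ∧ (y = x ↔ Q)) ↔ ((Q → y = x) ∧ (¬Q → x < y)) := by
  by_cases hQ : Q
  · simp only [hQ, iff_true, true_implies, not_true_eq_false, false_implies, and_true]
    exact ⟨fun h => h.2, fun h => ⟨h.ge, h⟩⟩
  · simp only [hQ, iff_false, false_implies, not_false_eq_true, true_implies, true_and]
    exact ⟨fun h => lt_of_le_of_ne h.1 (Ne.symm h.2), fun h => ⟨h.le, h.ne'⟩⟩

theorem isRepresentation_iff :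
    IsRepresentation R1 R2 u ↔
      (∀ a b, indiffPart R1 a b → u a = u b) ∧ (∀ a b, strictPart R1 a b → u b < u a) ∧
      (∀ a b c d, indiffPart R2 (a, b) (c, d) → u a - u b = u c - u d) ∧
      (∀ a b c d, strictPart R2 (a, b) (c, d) → u c - u d < u a - u b) := by
  simp only [IsRepresentation, indiffPart, strictPart, le_and_eq_iff_iff, and_imp, imp_and,
    forall_and, and_assoc]

theorem Consistent.exists_normRep (hcons : Consistent R1 R2) (h10 : strictPart R1 a1 a0) :
    ∃ u, NormRep R1 R2 a0 a1 u := by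
  obtain ⟨u, hu⟩ := hcons
  obtain ⟨hI1, hP1, hI2, hP2⟩ := isRepresentation_iff.mp hu
  have hd : 0 < u a1 - u a0 := sub_pos.mpr (hP1 a1 a0 h10)
  refine ⟨fun a => (u a - u a0) / (u a1 - u a0), isRepresentation_iff.mpr ⟨?_, ?_, ?_, ?_⟩,
    by simp, div_self hd.ne'⟩
  · intro a b h
    simp only [hI1 a b h]
  · intro a b h
    exact div_lt_div_of_pos_right (by linarith [hP1 a b h]) hd
  · intro a b c d h
    simp only [← sub_div, sub_sub_sub_cancel_right, hI2 a b c d h]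
  · intro a b c d h
    simp only [← sub_div, sub_sub_sub_cancel_right]
    exact div_lt_div_of_pos_right (hP2 a b c d h) hd

theorem NormRep.exists_pos_normRepDelta [Finite A] (hu : NormRep R1 R2 a0 a1 u) :
    ∃ δ > 0, NormRepDelta R1 R2 a0 a1 δ u := by
  obtain ⟨-, hP1, -, hP2⟩ := isRepresentation_iff.mp hu.1
  obtain ⟨δ1, hδ1, h1⟩ := exists_pos_forall_le_of_finite (P := fun x : A × A => strictPart R1 x.1 x.2)
    (f := fun x => u x.1 - u x.2) fun x hx => sub_pos.mpr (hP1 x.1 x.2 hx)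
  obtain ⟨δ2, hδ2, h2⟩ := exists_pos_forall_le_of_finite
    (P := fun x : (A × A) × (A × A) => strictPart R2 x.1 x.2)
    (f := fun x => u x.1.1 - u x.1.2 - u x.2.1 + u x.2.2)
    fun x hx => by linarith [hP2 x.1.1 x.1.2 x.2.1 x.2.2 hx]
  exact ⟨min δ1 δ2, lt_min hδ1 hδ2, hu,
    fun a b h => (min_le_left _ _).trans (h1 (a, b) h),
    fun c d e f h => (min_le_right _ _).trans (h2 ((c, d), (e, f)) h)⟩

end Representation

section ConstraintSet

variable {s : ℕ} {R1 : Fin s → Fin s → Prop} {R2 : (Fin s × Fin s) → (Fin s × Fin s) → Prop}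
  {a0 a1 : Fin s}

open Filter Topology

theorem convex_constraintSet : Convex ℝ (ConstraintSet R1 R2 a0 a1) := by
  rintro ⟨v, ξ⟩ ⟨hv01, hξ01, hv0, hv1, hvI1, hvP1, hvI2, hvP2⟩ ⟨w, η⟩
    ⟨hw01, hη01, hw0, hw1, hwI1, hwP1, hwI2, hwP2⟩ a b ha hb hab
  simp only [Prod.smul_mk, Prod.mk_add_mk]
  refine ⟨fun i => convex_Icc 0 1 (hv01 i) (hw01 i) ha hb hab,
    convex_Icc 0 1 hξ01 hη01 ha hb hab, ?_, ?_, ?_, ?_, ?_, ?_⟩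
  all_goals simp only [Pi.add_apply, Pi.smul_apply, smul_eq_mul] at *
  · simp [hv0, hw0]
  · simp [hv1, hw1, hab]
  · intro i j h
    rw [hvI1 i j h, hwI1 i j h]
  · intro i j h
    linarith [mul_le_mul_of_nonneg_left (hvP1 i j h) ha,
      mul_le_mul_of_nonneg_left (hwP1 i j h) hb]
  · intro k l r t h
    linear_combination a * hvI2 k l r t h + b * hwI2 k l r t h
  · intro k l r t h
    linarith [mul_le_mul_of_nonneg_left (hvP2 k l r t h) ha,
      mul_le_mul_of_nonneg_left (hwP2 k l r t h) hb]

theorem isClosed_constraintSet : IsClosed (ConstraintSet R1 R2 a0 a1) := by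
  simp only [ConstraintSet, Set.ofPred_and, Set.ofPred_forall]
  repeat' first
    | exact isClosed_Icc.preimage (by fun_prop)
    | apply IsClosed.inter
    | refine isClosed_iInter fun _ => ?_
    | exact isClosed_eq (by fun_prop) (by fun_prop)
    | exact isClosed_le (by fun_prop) (by fun_prop)

theorem isCompact_constraintSetAt (ξ0 : ℝ) : IsCompact (ConstraintSetAt R1 R2 a0 a1 ξ0) :=
  isCompact_Icc.of_isClosed_subset
    (isClosed_constraintSet.preimage (Continuous.prodMk_left ξ0))
    fun _ hv => ⟨fun i => (hv.1 i).1, fun i => (hv.1 i).2⟩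

theorem NormRepDelta.mem_constraintSetAt (hbd : Bounded R1 a0 a1) {δ : ℝ} (hδ : 0 ≤ δ)
    {u : Fin s → ℝ} (hu : NormRepDelta R1 R2 a0 a1 δ u) :
    u ∈ ConstraintSetAt R1 R2 a0 a1 δ := by
  obtain ⟨⟨hrep, h0, h1⟩, hP1, hP2⟩ := hu
  obtain ⟨hI1, -, hI2, -⟩ := isRepresentation_iff.mp hrep
  have hδ1 : δ ≤ 1 := by simpa [h0, h1] using hP1 a1 a0 hbd.2.2
  refine ⟨fun i => ⟨?_, ?_⟩, ⟨hδ, hδ1⟩, h0, h1, hI1, hP1, hI2, hP2⟩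
  · simpa [h0] using hrep.1 i a0 (hbd.2.1 i) |>.1
  · simpa [h1] using hrep.1 a1 i (hbd.1 i) |>.1

theorem normRepDelta_of_mem_constraintSetAt {δ ξ : ℝ} (hξ : 0 < ξ) (hδξ : δ ≤ ξ)
    {v : Fin s → ℝ} (hv : v ∈ ConstraintSetAt R1 R2 a0 a1 ξ) :
    NormRepDelta R1 R2 a0 a1 δ v := by
  obtain ⟨-, -, h0, h1, hI1, hP1, hI2, hP2⟩ := hv
  refine ⟨⟨isRepresentation_iff.mpr ⟨hI1, fun a b h => ?_, hI2, fun a b c d h => ?_⟩, h0, h1⟩,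
    fun a b h => hδξ.trans (hP1 a b h), fun a b c d h => hδξ.trans (hP2 a b c d h)⟩
  · linarith [hP1 a b h]
  · linarith [hP2 a b c d h]

theorem mem_closure_normRepDelta {δ ξ : ℝ} {v w : Fin s → ℝ}
    (hv : v ∈ ConstraintSetAt R1 R2 a0 a1 δ) (hw : w ∈ ConstraintSetAt R1 R2 a0 a1 ξ)
    (hξ : 0 < ξ) (hδξ : δ ≤ ξ) :
    v ∈ closure {u | NormRepDelta R1 R2 a0 a1 δ u} := by
  have hδ : 0 ≤ δ := hv.2.1.1
  have hseg : ∀ t ∈ Set.Ioc (0 : ℝ) 1,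
      (1 - t) • v + t • w ∈ {u | NormRepDelta R1 R2 a0 a1 δ u} := by
    rintro t ⟨ht0, ht1⟩
    have hmem := convex_constraintSet hv hw (sub_nonneg.mpr ht1) ht0.le (sub_add_cancel 1 t)
    simp only [Prod.smul_mk, Prod.mk_add_mk, smul_eq_mul] at hmem
    exact normRepDelta_of_mem_constraintSetAt (by positivity) (by nlinarith) hmem
  have hlim : Tendsto (fun t : ℝ => (1 - t) • v + t • w) (𝓝[>] 0) (𝓝 v) := by
    have hcont : Continuous (fun t : ℝ => (1 - t) • v + t • w) := by fun_prop
    simpa using hcont.continuousWithinAt.tendsto (x := 0) (s := Set.Ioi 0)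
  refine mem_closure_of_tendsto hlim ?_
  filter_upwards [Ioc_mem_nhdsGT one_pos] using hseg

end ConstraintSet

theorem stmt5_general {s : ℕ} (R1 : Fin s → Fin s → Prop)
    (R2 : (Fin s × Fin s) → (Fin s × Fin s) → Prop) (a0 a1 : Fin s)
    (hcons : Consistent R1 R2) (hbd : Bounded R1 a0 a1)
    (p q : Fin s → ℝ)
    (ξstar : ℝ) (hξ : IsGreatest {ξ | ∃ v, (v, ξ) ∈ ConstraintSet R1 R2 a0 a1} ξstar)
    (ε : ℝ) (hε : ε ∈ Set.Icc (0:ℝ) 1) :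
    ∃ m : ℝ,
      IsLeast {x | ∃ v ∈ ConstraintSetAt R1 R2 a0 a1 (ε * ξstar),
          x = ∑ i, v i * (p i - q i)} m ∧
      sInf {x | ∃ u, NormRepDelta R1 R2 a0 a1 (ε * ξstar) u ∧
          x = ∑ i, u i * (p i - q i)} = m := by
  set δ := ε * ξstar
  set f : (Fin s → ℝ) → ℝ := fun v => ∑ i, v i * (p i - q i)
  obtain ⟨u, hu⟩ := hcons.exists_normRep hbd.2.2
  obtain ⟨ξ, hξpos, huξ⟩ := hu.exists_pos_normRepDelta
  have hξstar : 0 < ξstar := hξpos.trans_le (hξ.2 ⟨u, huξ.mem_constraintSetAt hbd hξpos.le⟩)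
  obtain ⟨vstar, hvstar⟩ := hξ.1
  have hδ : 0 ≤ δ := mul_nonneg hε.1 hξstar.le
  have hδξ : δ ≤ ξstar := mul_le_of_le_one_left hξstar.le hε.2
  have hvstarδ : vstar ∈ ConstraintSetAt R1 R2 a0 a1 δ :=
    (normRepDelta_of_mem_constraintSetAt hξstar hδξ hvstar).mem_constraintSetAt hbd hδ
  obtain ⟨vmin, hvmin, hmin⟩ := (isCompact_constraintSetAt δ).exists_isMinOn ⟨vstar, hvstarδ⟩
    (show Continuous f by fun_prop).continuousOn
  refine ⟨f vmin, ⟨⟨vmin, hvmin, rfl⟩, ?_⟩, ?_⟩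
  · rintro _ ⟨v, hv, rfl⟩
    exact hmin hv
  · have hset : {x | ∃ u, NormRepDelta R1 R2 a0 a1 δ u ∧ x = f u} =
        f '' {u | NormRepDelta R1 R2 a0 a1 δ u} := by
      ext; simp [eq_comm]
    rw [hset]
    exact csInf_image_eq_of_isMinOn_of_mem_closure (by fun_prop)
      (fun u hu => hu.mem_constraintSetAt hbd hδ) hmin
      (mem_closure_normRepDelta hvmin hvstar hξstar hδξ)

/-- Proposition 4 i): the (regularized) test statistic, an infimum over `𝒩^{ε·ξ*}_𝒜`,
equals the optimal value of the linear program over `C_{ε·ξ*}`, and this minimum is attained. -/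
theorem stmt5 {s : ℕ} (R1 : Fin s → Fin s → Prop)
    (R2 : (Fin s × Fin s) → (Fin s × Fin s) → Prop) (a0 a1 : Fin s)
    (hps : IsPrefSystem R1 R2) (hcons : Consistent R1 R2) (hbd : Bounded R1 a0 a1)
    (p q : Fin s → ℝ) (hp : IsPMF p) (hq : IsPMF q)
    (ξstar : ℝ) (hξ : IsGreatest {ξ | ∃ v, (v, ξ) ∈ ConstraintSet R1 R2 a0 a1} ξstar)
    (ε : ℝ) (hε : ε ∈ Set.Icc (0:ℝ) 1) :
    ∃ m : ℝ,
      IsLeast {x | ∃ v ∈ ConstraintSetAt R1 R2 a0 a1 (ε * ξstar),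
          x = ∑ i, v i * (p i - q i)} m ∧
      sInf {x | ∃ u, NormRepDelta R1 R2 a0 a1 (ε * ξstar) u ∧
          x = ∑ i, u i * (p i - q i)} = m :=
  stmt5_general R1 R2 a0 a1 hcons hbd p q ξstar hξ ε hε

end GSD
end

section
/- Let 𝒜 = [Z, R₁, R₂] be a consistent bounded preference system on a finite set Z = {z₁,…,z_s} with minimal element z₁ and maximal element z₂, let ε ∈ [0,1], let ξ* be the maximal value of ξ over C, and let M_X and M_Y be convex hulls of finite nonempty sets E_X and E_Y of probability mass functions on Z. Then inf over (π₁, π₂, v) ∈ M_X × M_Y × C_{ε·ξ*} of Σ_{ℓ=1}^{s} v_ℓ·(π₁({z_ℓ}) − π₂({z_ℓ})) equals the minimum over (π₁,π₂) ∈ E_X × E_Y of [min over v ∈ C_{ε·ξ*} of Σ_{ℓ=1}^{s} v_ℓ·(π₁({z_ℓ}) − π₂({z_ℓ}))]. -/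
open MeasureTheory
open scoped BigOperators

namespace GSD

/-- Proposition 5 i): the robustified statistic, infimum over `M_X × M_Y × C_{ε·ξ*}`
with credal sets given as convex hulls of finitely many pmfs, is attained on the
extreme points `E_X × E_Y`. -/
theorem stmt7 {s : ℕ} (R1 : Fin s → Fin s → Prop)
    (R2 : (Fin s × Fin s) → (Fin s × Fin s) → Prop) (a0 a1 : Fin s)
    (hps : IsPrefSystem R1 R2) (hcons : Consistent R1 R2) (hbd : Bounded R1 a0 a1)
    (ξstar : ℝ) (hξ : IsGreatest {ξ | ∃ v, (v, ξ) ∈ ConstraintSet R1 R2 a0 a1} ξstar)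
    (ε : ℝ) (hε : ε ∈ Set.Icc (0:ℝ) 1)
    (EX EY : Finset (Fin s → ℝ)) (hEX : EX.Nonempty) (hEY : EY.Nonempty)
    (hEXp : ∀ p ∈ EX, IsPMF p) (hEYp : ∀ q ∈ EY, IsPMF q) :
    ∃ m : ℝ,
      IsLeast {x | ∃ p ∈ EX, ∃ q ∈ EY, ∃ v ∈ ConstraintSetAt R1 R2 a0 a1 (ε * ξstar),
          x = ∑ i, v i * (p i - q i)} m ∧
      sInf {x | ∃ p ∈ convexHull ℝ (EX : Set (Fin s → ℝ)),
          ∃ q ∈ convexHull ℝ (EY : Set (Fin s → ℝ)),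
          ∃ v ∈ ConstraintSetAt R1 R2 a0 a1 (ε * ξstar),
          x = ∑ i, v i * (p i - q i)} = m := by
  classical
  set ξ0 : ℝ := ε * ξstar with hξ0def
  obtain ⟨⟨v0, hv0⟩, hub⟩ := hξ
  have hξstar : ξstar ∈ Set.Icc (0:ℝ) 1 := hv0.2.1
  have hξ0le : ξ0 ≤ ξstar := mul_le_of_le_one_left hξstar.1 hε.2
  have hξ0mem : ξ0 ∈ Set.Icc (0:ℝ) 1 :=
    ⟨mul_nonneg hε.1 hξstar.1, le_trans hξ0le hξstar.2⟩
  -- Nonemptiness of the slice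
  have hCne : (ConstraintSetAt R1 R2 a0 a1 ξ0).Nonempty := by
    refine ⟨v0, ?_⟩
    obtain ⟨h1, h2, h3, h4, h5, h6, h7, h8⟩ := hv0
    exact ⟨h1, hξ0mem, h3, h4, h5, fun i j h => le_trans hξ0le (h6 i j h), h7,
      fun k l r t h => le_trans hξ0le (h8 k l r t h)⟩
  -- Closedness helpers
  have hcImp : ∀ (P : Prop) (f g : (Fin s → ℝ) → ℝ), Continuous f → Continuous g →
      IsClosed {v : Fin s → ℝ | P → f v = g v} := by
    intro P f g hf hg
    by_cases h : P
    · simpa [h] using isClosed_eq hf hg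
    · simp [h]
  have hcImpLe : ∀ (P : Prop) (f : (Fin s → ℝ) → ℝ), Continuous f →
      IsClosed {v : Fin s → ℝ | P → ξ0 ≤ f v} := by
    intro P f hf
    by_cases h : P
    · simpa [h] using isClosed_le continuous_const hf
    · simp [h]
  -- Compactness of the slice
  have hCc : IsCompact (ConstraintSetAt R1 R2 a0 a1 ξ0) := by
    have heq : ConstraintSetAt R1 R2 a0 a1 ξ0 =
        (⋂ i, {v : Fin s → ℝ | v i ∈ Set.Icc (0:ℝ) 1}) ∩
        ({v : Fin s → ℝ | v a0 = 0} ∩ ({v : Fin s → ℝ | v a1 = 1} ∩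
        ((⋂ i, ⋂ j, {v : Fin s → ℝ | indiffPart R1 i j → v i = v j}) ∩
        ((⋂ i, ⋂ j, {v : Fin s → ℝ | strictPart R1 i j → ξ0 ≤ v i - v j}) ∩
        ((⋂ k, ⋂ l, ⋂ r, ⋂ t,
            {v : Fin s → ℝ | indiffPart R2 (k, l) (r, t) → v k - v l = v r - v t}) ∩
        (⋂ k, ⋂ l, ⋂ r, ⋂ t,
            {v : Fin s → ℝ | strictPart R2 (k, l) (r, t) →
              ξ0 ≤ v k - v l - v r + v t})))))) := by
      ext v
      simp only [ConstraintSetAt, ConstraintSet, Set.mem_setOf_eq, Set.mem_inter_iff,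
        Set.mem_iInter]
      constructor
      · rintro ⟨h1, h2, h3, h4, h5, h6, h7, h8⟩
        exact ⟨h1, h3, h4, h5, h6, h7, h8⟩
      · rintro ⟨h1, h3, h4, h5, h6, h7, h8⟩
        exact ⟨h1, hξ0mem, h3, h4, h5, h6, h7, h8⟩
    have hclosed : IsClosed (ConstraintSetAt R1 R2 a0 a1 ξ0) := by
      rw [heq]
      refine IsClosed.inter ?_ (IsClosed.inter ?_ (IsClosed.inter ?_
        (IsClosed.inter ?_ (IsClosed.inter ?_ (IsClosed.inter ?_ ?_)))))
      · exact isClosed_iInter fun i =>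
          (isClosed_Icc).preimage (continuous_apply i)
      · exact isClosed_eq (continuous_apply a0) continuous_const
      · exact isClosed_eq (continuous_apply a1) continuous_const
      · exact isClosed_iInter fun i => isClosed_iInter fun j =>
          hcImp _ _ _ (continuous_apply i) (continuous_apply j)
      · exact isClosed_iInter fun i => isClosed_iInter fun j =>
          hcImpLe _ _ ((continuous_apply i).sub (continuous_apply j))
      · exact isClosed_iInter fun k => isClosed_iInter fun l =>
          isClosed_iInter fun r => isClosed_iInter fun t =>
          hcImp _ _ _ ((continuous_apply k).sub (continuous_apply l))
            ((continuous_apply r).sub (continuous_apply t))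
      · exact isClosed_iInter fun k => isClosed_iInter fun l =>
          isClosed_iInter fun r => isClosed_iInter fun t =>
          hcImpLe _ _ ((((continuous_apply k).sub (continuous_apply l)).sub
            (continuous_apply r)).add (continuous_apply t))
    have hsub : ConstraintSetAt R1 R2 a0 a1 ξ0 ⊆
        Set.pi Set.univ (fun _ : Fin s => Set.Icc (0:ℝ) 1) := by
      intro v hv i _
      exact hv.1 i
    exact (isCompact_univ_pi fun _ => isCompact_Icc).of_isClosed_subset hclosed hsub
  -- The evaluation function
  set F : ((Fin s → ℝ) × (Fin s → ℝ) × (Fin s → ℝ)) → ℝ :=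
    fun w => ∑ i, w.2.2 i * (w.1 i - w.2.1 i) with hFdef
  have hFcont : Continuous F := by
    refine continuous_finset_sum _ fun i _ => Continuous.mul ?_ (Continuous.sub ?_ ?_)
    · exact (continuous_apply i).comp (continuous_snd.comp continuous_snd)
    · exact (continuous_apply i).comp continuous_fst
    · exact (continuous_apply i).comp (continuous_fst.comp continuous_snd)
  set S1 : Set ℝ := {x | ∃ p ∈ EX, ∃ q ∈ EY, ∃ v ∈ ConstraintSetAt R1 R2 a0 a1 ξ0,
      x = ∑ i, v i * (p i - q i)} with hS1def
  have hS1img : S1 = F '' ((EX : Set (Fin s → ℝ)) ×ˢ ((EY : Set (Fin s → ℝ)) ×ˢ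
      ConstraintSetAt R1 R2 a0 a1 ξ0)) := by
    ext x
    constructor
    · rintro ⟨p, hp, q, hq, v, hv, rfl⟩
      exact ⟨(p, q, v), ⟨hp, hq, hv⟩, rfl⟩
    · rintro ⟨⟨p, q, v⟩, ⟨hp, hq, hv⟩, rfl⟩
      exact ⟨p, hp, q, hq, v, hv, rfl⟩
  have hS1c : IsCompact S1 := by
    rw [hS1img]
    exact (((EX.finite_toSet.isCompact).prod
      ((EY.finite_toSet.isCompact).prod hCc)).image hFcont)
  have hS1ne : S1.Nonempty := by
    obtain ⟨p, hp⟩ := hEX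
    obtain ⟨q, hq⟩ := hEY
    obtain ⟨v, hv⟩ := hCne
    exact ⟨_, p, hp, q, hq, v, hv, rfl⟩
  obtain ⟨m, hm⟩ := hS1c.exists_isLeast hS1ne
  refine ⟨m, hm, ?_⟩
  have hsplit : ∀ v a b : Fin s → ℝ,
      ∑ i, v i * (a i - b i) = (∑ i, v i * a i) - ∑ i, v i * b i := by
    intro v a b
    rw [← Finset.sum_sub_distrib]
    exact Finset.sum_congr rfl fun i _ => mul_sub _ _ _
  have hlb : ∀ x ∈ {x | ∃ p ∈ convexHull ℝ (EX : Set (Fin s → ℝ)),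
      ∃ q ∈ convexHull ℝ (EY : Set (Fin s → ℝ)),
      ∃ v ∈ ConstraintSetAt R1 R2 a0 a1 ξ0, x = ∑ i, v i * (p i - q i)}, m ≤ x := by
    rintro x ⟨p, hp, q, hq, v, hv, rfl⟩
    have hlin : IsLinearMap ℝ (fun w : Fin s → ℝ => ∑ i, v i * w i) := by
      constructor
      · intro w w'
        rw [← Finset.sum_add_distrib]
        exact Finset.sum_congr rfl fun i _ => by simp [mul_add]
      · intro c w
        rw [smul_eq_mul, Finset.mul_sum]
        exact Finset.sum_congr rfl fun i _ => by simp [smul_eq_mul]; ring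
    obtain ⟨pstar, hpstar, hpmin⟩ :=
      EX.exists_min_image (fun w => ∑ i, v i * w i) hEX
    obtain ⟨qstar, hqstar, hqmax⟩ :=
      EY.exists_max_image (fun w => ∑ i, v i * w i) hEY
    have hple : (∑ i, v i * pstar i) ≤ ∑ i, v i * p i :=
      convexHull_min (fun w hw => hpmin w hw)
        (convex_halfSpace_ge hlin (∑ i, v i * pstar i)) hp
    have hqle : (∑ i, v i * q i) ≤ ∑ i, v i * qstar i :=
      convexHull_min (fun w hw => hqmax w hw)
        (convex_halfSpace_le hlin (∑ i, v i * qstar i)) hq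
    have hmem : (∑ i, v i * (pstar i - qstar i)) ∈ S1 :=
      ⟨pstar, hpstar, qstar, hqstar, v, hv, rfl⟩
    calc m ≤ ∑ i, v i * (pstar i - qstar i) := hm.2 hmem
      _ ≤ ∑ i, v i * (p i - q i) := by
          rw [hsplit, hsplit]
          exact sub_le_sub hple hqle
  have hmmem : m ∈ {x | ∃ p ∈ convexHull ℝ (EX : Set (Fin s → ℝ)),
      ∃ q ∈ convexHull ℝ (EY : Set (Fin s → ℝ)),
      ∃ v ∈ ConstraintSetAt R1 R2 a0 a1 ξ0, x = ∑ i, v i * (p i - q i)} := by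
    obtain ⟨p, hp, q, hq, v, hv, rfl⟩ := hm.1
    exact ⟨p, subset_convexHull ℝ _ hp, q, subset_convexHull ℝ _ hq, v, hv, rfl⟩
  exact IsLeast.csInf_eq ⟨hmmem, hlb⟩

end GSD
end

section
/- Let 𝒜 = [Z, R₁, R₂] be a consistent bounded preference system on a finite set Z = {z₁,…,z_s} with minimal element z₁ and maximal element z₂, and let M_X, M_Y be convex hulls of finite nonempty sets E_X, E_Y of probability mass functions on Z. If min over (π₁,π₂) ∈ E_X × E_Y of [min over v ∈ C₀ of Σ_{ℓ=1}^{s} v_ℓ·(π₁({z_ℓ}) − π₂({z_ℓ}))] ≥ 0, then for every pair (π₁,π₂) ∈ M_X × M_Y one has inf_{u ∈ 𝒩_𝒜} Σ_{ℓ=1}^{s} u(z_ℓ)·(π₁({z_ℓ}) − π₂({z_ℓ})) ≥ 0. -/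
open MeasureTheory
open scoped BigOperators

namespace GSD

/-- Proposition 5 ii): if the robustified LP value over the extreme points is nonnegative,
then in-sample GSD holds for every pair of laws in the credal sets. -/
theorem stmt8 {s : ℕ} (R1 : Fin s → Fin s → Prop)
    (R2 : (Fin s × Fin s) → (Fin s × Fin s) → Prop) (a0 a1 : Fin s)
    (hps : IsPrefSystem R1 R2) (hcons : Consistent R1 R2) (hbd : Bounded R1 a0 a1)
    (EX EY : Finset (Fin s → ℝ)) (hEX : EX.Nonempty) (hEY : EY.Nonempty)
    (hEXp : ∀ p ∈ EX, IsPMF p) (hEYp : ∀ q ∈ EY, IsPMF q)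
    (h : ∀ p ∈ EX, ∀ q ∈ EY, ∀ v ∈ ConstraintSetAt R1 R2 a0 a1 0,
      0 ≤ ∑ i, v i * (p i - q i)) :
    ∀ p ∈ convexHull ℝ (EX : Set (Fin s → ℝ)),
      ∀ q ∈ convexHull ℝ (EY : Set (Fin s → ℝ)),
        ∀ u, NormRep R1 R2 a0 a1 u → 0 ≤ ∑ i, u i * (p i - q i) := by
  intro p hp q hq u hu
  obtain ⟨⟨hr1, hr2⟩, hu0, hu1⟩ := hu
  obtain ⟨hmax, hmin, hstr⟩ := hbd
  -- u lies in the constraint set at ξ0 = 0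
  have hmem : u ∈ ConstraintSetAt R1 R2 a0 a1 0 := by
    refine ⟨?_, by norm_num, hu0, hu1, ?_, ?_, ?_, ?_⟩
    · intro i
      constructor
      · have := (hr1 i a0 (hmin i)).1; linarith [hu0]
      · have := (hr1 a1 i (hmax i)).1; linarith [hu1]
    · intro i j hij
      exact (hr1 i j hij.1).2.mpr hij.2
    · intro i j hij
      show (0:ℝ) ≤ u i - u j
      have := (hr1 i j hij.1).1; linarith
    · intro k l r t hkl
      exact (hr2 k l r t hkl.1).2.mpr hkl.2
    · intro k l r t hkl
      show (0:ℝ) ≤ u k - u l - u r + u t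
      have := (hr2 k l r t hkl.1).1; linarith
  -- linearity of the evaluation map
  have hlin : IsLinearMap ℝ (fun w : Fin s → ℝ => ∑ i, u i * w i) := by
    constructor
    · intro x y; simp [mul_add, Finset.sum_add_distrib]
    · intro c x; simp [Finset.mul_sum]; ring_nf; simp [mul_comm, mul_assoc, mul_left_comm]
  have key : ∀ p' ∈ EX, ∀ q' ∈ EY,
      ∑ i, u i * q' i ≤ ∑ i, u i * p' i := by
    intro p' hp' q' hq'
    have := h p' hp' q' hq' u hmem
    have : (0:ℝ) ≤ ∑ i, (u i * p' i - u i * q' i) := by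
      simpa [mul_sub] using this
    rw [Finset.sum_sub_distrib] at this
    linarith
  -- extend to hull in p
  have step1 : ∀ q' ∈ EY, ∑ i, u i * q' i ≤ ∑ i, u i * p i := by
    intro q' hq'
    have hconv : Convex ℝ {w : Fin s → ℝ | ∑ i, u i * q' i ≤ ∑ i, u i * w i} :=
      convex_halfSpace_ge hlin _
    have hsub : (EX : Set (Fin s → ℝ)) ⊆ {w | ∑ i, u i * q' i ≤ ∑ i, u i * w i} :=
      fun p' hp' => key p' hp' q' hq'
    exact convexHull_min hsub hconv hp
  -- extend to hull in q
  have step2 : ∑ i, u i * q i ≤ ∑ i, u i * p i := by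
    have hconv : Convex ℝ {w : Fin s → ℝ | ∑ i, u i * w i ≤ ∑ i, u i * p i} :=
      convex_halfSpace_le hlin _
    have hsub : (EY : Set (Fin s → ℝ)) ⊆ {w | ∑ i, u i * w i ≤ ∑ i, u i * p i} :=
      fun q' hq' => step1 q' hq'
    exact convexHull_min hsub hconv hq
  have : (0:ℝ) ≤ ∑ i, u i * p i - ∑ i, u i * q i := by linarith
  calc (0:ℝ) ≤ ∑ i, u i * p i - ∑ i, u i * q i := this
    _ = ∑ i, u i * (p i - q i) := by
        rw [← Finset.sum_sub_distrib]; congr 1; ext i; ring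


end GSD
end

section
/- Let 𝒜 = [Z, R₁, R₂] be a consistent bounded preference system on a finite set Z = {z₁,…,z_s} with minimal element z₁ and maximal element z₂, let ε ∈ [0,1], let ξ* be the maximal value of ξ over C, let γ ∈ [0,1], and let p̂, q̂ be probability mass functions on Z. Let M_X = {π : π ≥ (1−γ)p̂} and M_Y = {π : π ≥ (1−γ)q̂} be γ-contamination credal sets. Then inf over (π₁, π₂, v) ∈ M_X × M_Y × C_{ε·ξ*} of Σ_{ℓ=1}^{s} v_ℓ·(π₁({z_ℓ}) − π₂({z_ℓ})) is attained at the pair π₁ = γ·δ_{z₁} + (1−γ)·p̂ and π₂ = γ·δ_{z₂} + (1−γ)·q̂, i.e., it equals min over v ∈ C_{ε·ξ*} of Σ_{ℓ=1}^{s} v_ℓ·((γδ_{z₁}+(1−γ)p̂)({z_ℓ}) − (γδ_{z₂}+(1−γ)q̂)({z_ℓ})). -/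
open MeasureTheory
open scoped BigOperators

namespace GSD

/-- The `γ`-contamination (linear-vacuous) credal set around the pmf `p`. -/
def contamSet {Z : Type*} [Fintype Z] (γ : ℝ) (p : Z → ℝ) : Set (Z → ℝ) :=
  {q | (∀ z, 0 ≤ q z) ∧ (∑ z, q z = 1) ∧ ∀ z, (1 - γ) * p z ≤ q z}

/-- The candidate extreme points `γ·δ_z + (1−γ)·p`, `z ∈ Z`. -/
def contamExtremes {Z : Type*} [DecidableEq Z] (γ : ℝ) (p : Z → ℝ) : Set (Z → ℝ) :=
  Set.range fun z0 => fun w => γ * (if w = z0 then (1:ℝ) else 0) + (1 - γ) * p w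

lemma sum_mul_ind {s : ℕ} (v : Fin s → ℝ) (a : Fin s) :
    ∑ i, v i * (if i = a then (1:ℝ) else 0) = v a := by
  simp [mul_ite, mul_one, mul_zero]

lemma constraintSetAt_isClosed {s : ℕ} (R1 : Fin s → Fin s → Prop)
    (R2 : (Fin s × Fin s) → (Fin s × Fin s) → Prop) (a0 a1 : Fin s) (ξ0 : ℝ)
    (hξ0 : ξ0 ∈ Set.Icc (0:ℝ) 1) :
    IsClosed (ConstraintSetAt R1 R2 a0 a1 ξ0) := by
  have : ConstraintSetAt R1 R2 a0 a1 ξ0 =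
      (⋂ i, {v : Fin s → ℝ | v i ∈ Set.Icc (0:ℝ) 1}) ∩
      {v | v a0 = 0} ∩ {v | v a1 = 1} ∩
      (⋂ i, ⋂ j, ⋂ _h : indiffPart R1 i j, {v : Fin s → ℝ | v i = v j}) ∩
      (⋂ i, ⋂ j, ⋂ _h : strictPart R1 i j, {v : Fin s → ℝ | ξ0 ≤ v i - v j}) ∩
      (⋂ k, ⋂ l, ⋂ r, ⋂ t, ⋂ _h : indiffPart R2 (k, l) (r, t),
        {v : Fin s → ℝ | v k - v l = v r - v t}) ∩
      (⋂ k, ⋂ l, ⋂ r, ⋂ t, ⋂ _h : strictPart R2 (k, l) (r, t),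
        {v : Fin s → ℝ | ξ0 ≤ v k - v l - v r + v t}) := by
    ext v
    constructor
    · rintro ⟨h1, _h2, h3, h4, h5, h6, h7, h8⟩
      refine ⟨⟨⟨⟨⟨⟨?_, h3⟩, h4⟩, ?_⟩, ?_⟩, ?_⟩, ?_⟩ <;>
        simp only [Set.mem_iInter, Set.mem_setOf_eq]
      · exact h1
      · exact h5
      · exact h6
      · exact fun k l r t h => h7 k l r t h
      · exact fun k l r t h => h8 k l r t h
    · rintro ⟨⟨⟨⟨⟨⟨h1, h3⟩, h4⟩, h5⟩, h6⟩, h7⟩, h8⟩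
      simp only [Set.mem_iInter, Set.mem_setOf_eq] at h1 h5 h6 h7 h8
      exact ⟨h1, hξ0, h3, h4, h5, h6, fun k l r t h => h7 k l r t h,
        fun k l r t h => h8 k l r t h⟩
  rw [this]
  have hc : ∀ i : Fin s, Continuous fun v : Fin s → ℝ => v i := fun i => continuous_apply i
  refine IsClosed.inter (IsClosed.inter (IsClosed.inter (IsClosed.inter (IsClosed.inter
    (IsClosed.inter ?_ ?_) ?_) ?_) ?_) ?_) ?_
  · exact isClosed_iInter fun i => (isClosed_Icc).preimage (hc i)
  · exact isClosed_eq (hc a0) continuous_const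
  · exact isClosed_eq (hc a1) continuous_const
  · exact isClosed_iInter fun i => isClosed_iInter fun j => isClosed_iInter fun _ =>
      isClosed_eq (hc i) (hc j)
  · exact isClosed_iInter fun i => isClosed_iInter fun j => isClosed_iInter fun _ =>
      isClosed_le continuous_const ((hc i).sub (hc j))
  · exact isClosed_iInter fun k => isClosed_iInter fun l => isClosed_iInter fun r =>
      isClosed_iInter fun t => isClosed_iInter fun _ =>
      isClosed_eq ((hc k).sub (hc l)) ((hc r).sub (hc t))
  · exact isClosed_iInter fun k => isClosed_iInter fun l => isClosed_iInter fun r =>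
      isClosed_iInter fun t => isClosed_iInter fun _ =>
      isClosed_le continuous_const ((((hc k).sub (hc l)).sub (hc r)).add (hc t))

/-- Proposition 6: under `γ`-contamination models around `p̂` and `q̂`, the robustified
infimum over `M_X × M_Y × C_{ε·ξ*}` is attained at the least favorable pair
`π₁ = γδ_{z₁} + (1−γ)p̂`, `π₂ = γδ_{z₂} + (1−γ)q̂` (`z₁` minimal, `z₂` maximal). -/
theorem stmt10 {s : ℕ} (R1 : Fin s → Fin s → Prop)
    (R2 : (Fin s × Fin s) → (Fin s × Fin s) → Prop) (a0 a1 : Fin s)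
    (hps : IsPrefSystem R1 R2) (hcons : Consistent R1 R2) (hbd : Bounded R1 a0 a1)
    (ξstar : ℝ) (hξ : IsGreatest {ξ | ∃ v, (v, ξ) ∈ ConstraintSet R1 R2 a0 a1} ξstar)
    (ε : ℝ) (hε : ε ∈ Set.Icc (0:ℝ) 1)
    (γ : ℝ) (hγ : γ ∈ Set.Icc (0:ℝ) 1)
    (p q : Fin s → ℝ) (hp : IsPMF p) (hq : IsPMF q) :
    ∃ m : ℝ,
      IsLeast {x | ∃ v ∈ ConstraintSetAt R1 R2 a0 a1 (ε * ξstar),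
          x = ∑ i, v i *
            ((γ * (if i = a0 then 1 else 0) + (1 - γ) * p i) -
             (γ * (if i = a1 then 1 else 0) + (1 - γ) * q i))} m ∧
      sInf {x | ∃ π1 ∈ contamSet γ p, ∃ π2 ∈ contamSet γ q,
          ∃ v ∈ ConstraintSetAt R1 R2 a0 a1 (ε * ξstar),
          x = ∑ i, v i * (π1 i - π2 i)} = m := by
  classical
  obtain ⟨⟨v0, hv0⟩, _hub⟩ := hξ
  have hξIcc : ξstar ∈ Set.Icc (0:ℝ) 1 := hv0.2.1
  have hεξ0 : 0 ≤ ε * ξstar := mul_nonneg hε.1 hξIcc.1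
  have hεξle : ε * ξstar ≤ ξstar := by nlinarith [hε.2, hξIcc.1]
  have hεξIcc : ε * ξstar ∈ Set.Icc (0:ℝ) 1 := ⟨hεξ0, hεξle.trans hξIcc.2⟩
  set S := ConstraintSetAt R1 R2 a0 a1 (ε * ξstar) with hS
  have hv0S : v0 ∈ S := by
    obtain ⟨h1, _h2, h3, h4, h5, h6, h7, h8⟩ := hv0
    exact ⟨h1, hεξIcc, h3, h4, h5, fun i j h => le_trans hεξle (h6 i j h), h7,
      fun k l r t h => le_trans hεξle (h8 k l r t h)⟩
  -- the two candidate extreme points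
  set π1s : Fin s → ℝ := fun i => γ * (if i = a0 then 1 else 0) + (1 - γ) * p i with hπ1s
  set π2s : Fin s → ℝ := fun i => γ * (if i = a1 then 1 else 0) + (1 - γ) * q i with hπ2s
  set f : (Fin s → ℝ) → ℝ := fun v => ∑ i, v i * (π1s i - π2s i) with hf
  have hfc : Continuous f := by
    apply continuous_finset_sum
    exact fun i _ => (continuous_apply i).mul continuous_const
  -- compactness of S and attainment of the minimum
  have hScomp : IsCompact S := by
    refine IsCompact.of_isClosed_subset
      (isCompact_univ_pi fun _ : Fin s => isCompact_Icc (a := (0:ℝ)) (b := 1))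
      (constraintSetAt_isClosed R1 R2 a0 a1 _ hεξIcc) ?_
    intro v hv
    exact fun i _ => hv.1 i
  obtain ⟨vm, hvmS, hmin⟩ := hScomp.exists_isMinOn ⟨v0, hv0S⟩ hfc.continuousOn
  refine ⟨f vm, ⟨⟨vm, hvmS, rfl⟩, ?_⟩, ?_⟩
  · rintro x ⟨v, hv, rfl⟩
    exact hmin hv
  -- now the sInf claim
  have h1γ : 0 ≤ 1 - γ := by linarith [hγ.2]
  have hπ1mem : π1s ∈ contamSet γ p := by
    refine ⟨fun z => ?_, ?_, fun z => ?_⟩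
    · have := (hp.1 z).1
      have : 0 ≤ (1 - γ) * p z := mul_nonneg h1γ this
      have h0 : (0:ℝ) ≤ γ * (if z = a0 then 1 else 0) := by
        split <;> simp [hγ.1]
      simp only [hπ1s]; linarith
    · simp only [hπ1s]
      rw [Finset.sum_add_distrib, ← Finset.mul_sum, ← Finset.mul_sum, hp.2]
      simp [Finset.sum_ite_eq']
    · have h0 : (0:ℝ) ≤ γ * (if z = a0 then 1 else 0) := by
        split <;> simp [hγ.1]
      simp only [hπ1s]; linarith
  have hπ2mem : π2s ∈ contamSet γ q := by
    refine ⟨fun z => ?_, ?_, fun z => ?_⟩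
    · have := (hq.1 z).1
      have : 0 ≤ (1 - γ) * q z := mul_nonneg h1γ this
      have h0 : (0:ℝ) ≤ γ * (if z = a1 then 1 else 0) := by
        split <;> simp [hγ.1]
      simp only [hπ2s]; linarith
    · simp only [hπ2s]
      rw [Finset.sum_add_distrib, ← Finset.mul_sum, ← Finset.mul_sum, hq.2]
      simp [Finset.sum_ite_eq']
    · have h0 : (0:ℝ) ≤ γ * (if z = a1 then 1 else 0) := by
        split <;> simp [hγ.1]
      simp only [hπ2s]; linarith
  have hmem : f vm ∈ {x | ∃ π1 ∈ contamSet γ p, ∃ π2 ∈ contamSet γ q,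
      ∃ v ∈ ConstraintSetAt R1 R2 a0 a1 (ε * ξstar), x = ∑ i, v i * (π1 i - π2 i)} :=
    ⟨π1s, hπ1mem, π2s, hπ2mem, vm, hvmS, rfl⟩
  -- lower bound for arbitrary π1, π2, v
  have hlb : ∀ x ∈ {x | ∃ π1 ∈ contamSet γ p, ∃ π2 ∈ contamSet γ q,
      ∃ v ∈ ConstraintSetAt R1 R2 a0 a1 (ε * ξstar), x = ∑ i, v i * (π1 i - π2 i)},
      f vm ≤ x := by
    rintro x ⟨π1, hπ1, π2, hπ2, v, hv, rfl⟩
    have hv01 : ∀ i, v i ∈ Set.Icc (0:ℝ) 1 := hv.1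
    have hva0 : v a0 = 0 := hv.2.2.1
    have hva1 : v a1 = 1 := hv.2.2.2.1
    have hA : ∑ i, v i * π1s i ≤ ∑ i, v i * π1 i := by
      have h1 : ∑ i, v i * π1s i = ∑ i, v i * ((1 - γ) * p i) := by
        simp only [hπ1s, mul_add, Finset.sum_add_distrib]
        have : ∑ i, v i * (γ * (if i = a0 then 1 else 0)) = γ * v a0 := by
          simp only [show ∀ i, v i * (γ * (if i = a0 then 1 else 0))
              = γ * (v i * (if i = a0 then 1 else 0)) from fun i => by ring,
            ← Finset.mul_sum, sum_mul_ind]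
        rw [this, hva0]; ring
      rw [h1]
      refine Finset.sum_le_sum fun i _ => ?_
      exact mul_le_mul_of_nonneg_left (hπ1.2.2 i) (hv01 i).1
    have hB : ∑ i, v i * π2 i ≤ ∑ i, v i * π2s i := by
      have h2 : ∑ i, v i * π2s i = γ + ∑ i, v i * ((1 - γ) * q i) := by
        simp only [hπ2s, mul_add, Finset.sum_add_distrib]
        have : ∑ i, v i * (γ * (if i = a1 then 1 else 0)) = γ * v a1 := by
          simp only [show ∀ i, v i * (γ * (if i = a1 then 1 else 0))
              = γ * (v i * (if i = a1 then 1 else 0)) from fun i => by ring,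
            ← Finset.mul_sum, sum_mul_ind]
        rw [this, hva1]; ring
      -- write π2 i = (1-γ) q i + r i with r i ≥ 0, ∑ r = γ
      have hr0 : ∀ i, 0 ≤ π2 i - (1 - γ) * q i := fun i => by linarith [hπ2.2.2 i]
      have hrsum : ∑ i, (π2 i - (1 - γ) * q i) = γ := by
        rw [Finset.sum_sub_distrib, hπ2.2.1, ← Finset.mul_sum, hq.2]; ring
      have hsplit : ∑ i, v i * π2 i
          = ∑ i, v i * ((1 - γ) * q i) + ∑ i, v i * (π2 i - (1 - γ) * q i) := by
        rw [← Finset.sum_add_distrib]; exact Finset.sum_congr rfl fun i _ => by ring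
      have hrle : ∑ i, v i * (π2 i - (1 - γ) * q i) ≤ γ := by
        calc ∑ i, v i * (π2 i - (1 - γ) * q i)
            ≤ ∑ i, 1 * (π2 i - (1 - γ) * q i) :=
              Finset.sum_le_sum fun i _ =>
                mul_le_mul_of_nonneg_right (hv01 i).2 (hr0 i)
          _ = γ := by simp only [one_mul]; exact hrsum
      rw [h2, hsplit]; linarith
    have hfle : f v ≤ ∑ i, v i * (π1 i - π2 i) := by
      have e1 : f v = ∑ i, v i * π1s i - ∑ i, v i * π2s i := by
        simp only [hf, mul_sub, Finset.sum_sub_distrib]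
      have e2 : ∑ i, v i * (π1 i - π2 i) = ∑ i, v i * π1 i - ∑ i, v i * π2 i := by
        simp only [mul_sub, Finset.sum_sub_distrib]
      rw [e1, e2]; linarith
    exact le_trans (hmin hv) hfle
  exact le_antisymm (csInf_le ⟨f vm, hlb⟩ hmem) (le_csInf ⟨_, hmem⟩ hlb)

end GSD
end

section
/- Let 𝒜 = [Z, R₁, R₂] be a consistent bounded preference system on a finite set Z = {z₁,…,z_s} with minimal element z₁ and maximal element z₂, let δ ∈ [0,1] with C_δ ≠ ∅, let γ ∈ [0,1], and let p̂, q̂ be probability mass functions on Z. Then min over v ∈ C_δ of Σ_{ℓ=1}^{s} v_ℓ·((γδ_{z₁}+(1−γ)p̂)({z_ℓ}) − (γδ_{z₂}+(1−γ)q̂)({z_ℓ})) = (1−γ) · [min over v ∈ C_δ of Σ_{ℓ=1}^{s} v_ℓ·(p̂({z_ℓ}) − q̂({z_ℓ}))] − γ; i.e., the robustified statistic under the γ-contamination model is the stated affine (shifted and scaled) transformation of the unrobustified statistic. -/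
open MeasureTheory
open scoped BigOperators

namespace GSD

/-- The `γ`-contamination `γ δ_a + (1 - γ) p` of a mass function `p` by the point mass at `a`. -/
def contaminate {ι : Type*} [DecidableEq ι] (γ : ℝ) (a : ι) (p : ι → ℝ) (i : ι) : ℝ :=
  γ * (if i = a then 1 else 0) + (1 - γ) * p i

theorem sum_mul_contaminate {ι : Type*} [Fintype ι] [DecidableEq ι] (γ : ℝ) (a : ι)
    (p v : ι → ℝ) :
    ∑ i, v i * contaminate γ a p i = γ * v a + (1 - γ) * ∑ i, v i * p i := by
  simp only [contaminate, mul_add, Finset.sum_add_distrib, Finset.mul_sum, mul_ite, mul_one,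
    mul_zero, Finset.sum_ite_eq', Finset.mem_univ, if_true]
  exact congrArg₂ _ (mul_comm _ _) (Finset.sum_congr rfl fun i _ => by ring)

theorem sum_mul_contaminate_sub_contaminate {ι : Type*} [Fintype ι] [DecidableEq ι]
    (γ : ℝ) {a0 a1 : ι} (p q v : ι → ℝ) (h0 : v a0 = 0) (h1 : v a1 = 1) :
    ∑ i, v i * (contaminate γ a0 p i - contaminate γ a1 q i) =
      (1 - γ) * ∑ i, v i * (p i - q i) - γ := by
  simp only [mul_sub, Finset.sum_sub_distrib, sum_mul_contaminate, h0, h1]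
  ring

theorem sInf_setOf_eq_of_eq_mul_sub {ι : Type*} {C : Set ι} {g h : ι → ℝ} {c : ℝ}
    (hc : 0 ≤ c) (d : ℝ) (hC : C.Nonempty) (hbdd : BddBelow (h '' C))
    (hgh : ∀ v ∈ C, g v = c * h v - d) :
    sInf {x | ∃ v ∈ C, x = g v} = c * sInf {x | ∃ v ∈ C, x = h v} - d := by
  have himg : {x | ∃ v ∈ C, x = g v} = (fun y => c * y - d) '' (h '' C) := by
    ext x
    simp only [Set.mem_ofPred_eq, Set.image_image, Set.mem_image]
    exact exists_congr fun v => and_congr_right fun hv => by rw [hgh v hv, eq_comm]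
  have hh : {x | ∃ v ∈ C, x = h v} = h '' C := by
    ext x
    simp only [Set.mem_ofPred_eq, Set.mem_image, eq_comm]
  have hmono : Monotone fun y : ℝ => c * y - d := fun _ _ hxy => by
    simpa using mul_le_mul_of_nonneg_left hxy hc
  rw [himg, hh, ← hmono.map_csInf_of_continuousAt (by fun_prop) (hC.image h) hbdd]

theorem constraintSetAt_subset_Icc {s : ℕ} (R1 : Fin s → Fin s → Prop)
    (R2 : (Fin s × Fin s) → (Fin s × Fin s) → Prop) (a0 a1 : Fin s) (ξ0 : ℝ) :
    ConstraintSetAt R1 R2 a0 a1 ξ0 ⊆ Set.Icc 0 1 :=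
  fun _ hv => ⟨fun i => (hv.1 i).1, fun i => (hv.1 i).2⟩

theorem bddBelow_image_sum_mul_of_subset_Icc {ι : Type*} [Fintype ι] {C : Set (ι → ℝ)}
    (hC : C ⊆ Set.Icc 0 1) (w : ι → ℝ) : BddBelow ((fun v => ∑ i, v i * w i) '' C) :=
  ((isCompact_Icc.image (by fun_prop)).bddBelow).mono (Set.image_mono hC)

/-- Every `v ∈ C_δ` has `v a0 = 0` and `v a1 = 1`, so the contaminated statistic
is the affine function `x ↦ (1 - γ) x - γ` of the uncontaminated one, and `sInf` commutes with
an increasing affine map. -/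
theorem stmt11_general {s : ℕ} (R1 : Fin s → Fin s → Prop)
    (R2 : (Fin s × Fin s) → (Fin s × Fin s) → Prop) (a0 a1 : Fin s)
    (δ : ℝ)
    (hne : (ConstraintSetAt R1 R2 a0 a1 δ).Nonempty)
    (γ : ℝ) (hγ : γ ∈ Set.Icc (0:ℝ) 1)
    (p q : Fin s → ℝ) :
    sInf {x | ∃ v ∈ ConstraintSetAt R1 R2 a0 a1 δ,
        x = ∑ i, v i *
          ((γ * (if i = a0 then 1 else 0) + (1 - γ) * p i) -
           (γ * (if i = a1 then 1 else 0) + (1 - γ) * q i))} =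
    (1 - γ) * sInf {x | ∃ v ∈ ConstraintSetAt R1 R2 a0 a1 δ,
        x = ∑ i, v i * (p i - q i)} - γ :=
  sInf_setOf_eq_of_eq_mul_sub (sub_nonneg.2 hγ.2) γ hne
    (bddBelow_image_sum_mul_of_subset_Icc (constraintSetAt_subset_Icc R1 R2 a0 a1 δ) _)
    fun _ hv => sum_mul_contaminate_sub_contaminate γ p q _ hv.2.2.1 hv.2.2.2.1

/-- The robustified statistic under the `γ`-contamination model is an affine transformation
of the unrobustified one: `min_{C_δ} Σ v·(π₁−π₂) = (1−γ)·min_{C_δ} Σ v·(p̂−q̂) − γ`. -/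
theorem stmt11 {s : ℕ} (R1 : Fin s → Fin s → Prop)
    (R2 : (Fin s × Fin s) → (Fin s × Fin s) → Prop) (a0 a1 : Fin s)
    (hps : IsPrefSystem R1 R2) (hcons : Consistent R1 R2) (hbd : Bounded R1 a0 a1)
    (δ : ℝ) (hδ : δ ∈ Set.Icc (0:ℝ) 1)
    (hne : (ConstraintSetAt R1 R2 a0 a1 δ).Nonempty)
    (γ : ℝ) (hγ : γ ∈ Set.Icc (0:ℝ) 1)
    (p q : Fin s → ℝ) (hp : IsPMF p) (hq : IsPMF q) :
    sInf {x | ∃ v ∈ ConstraintSetAt R1 R2 a0 a1 δ,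
        x = ∑ i, v i *
          ((γ * (if i = a0 then 1 else 0) + (1 - γ) * p i) -
           (γ * (if i = a1 then 1 else 0) + (1 - γ) * q i))} =
    (1 - γ) * sInf {x | ∃ v ∈ ConstraintSetAt R1 R2 a0 a1 δ,
        x = ∑ i, v i * (p i - q i)} - γ :=
  stmt11_general R1 R2 a0 a1 δ hne γ hγ p q

end GSD
end

section
/- For every r ∈ ℕ and every 0 ≤ z ≤ r, the preference system pref(ℝ^r) = [ℝ^r, R₁*, R₂*] is consistent, i.e., there exists a function u : ℝ^r → ℝ such that (x,y) ∈ R₁* implies u(x) ≥ u(y) with equality iff (x,y) ∈ I_{R₁*}, and ((x,y),(x',y')) ∈ R₂* implies u(x) − u(y) ≥ u(x') − u(y') with equality iff ((x,y),(x',y')) ∈ I_{R₂*}. -/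
open MeasureTheory
open scoped BigOperators

namespace GSD

/-- The relation `R₁*` of `pref(ℝ^r)`: componentwise dominance. -/
def R1star (r : ℕ) (x y : Fin r → ℝ) : Prop := ∀ j, y j ≤ x j

/-- The relation `R₂*` of `pref(ℝ^r)` with the first `z` dimensions cardinal and the
remaining ones ordinal. -/
def R2star (r z : ℕ) (p q : (Fin r → ℝ) × (Fin r → ℝ)) : Prop :=
  R1star r p.1 p.2 ∧ R1star r q.1 q.2 ∧
  (∀ j : Fin r, (j : ℕ) < z → q.1 j - q.2 j ≤ p.1 j - p.2 j) ∧
  (∀ j : Fin r, z ≤ (j : ℕ) → p.2 j ≤ q.2 j ∧ q.2 j ≤ q.1 j ∧ q.1 j ≤ p.1 j)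

/-!
The plain coordinate sum `u x = ∑ j, x j` already represents `pref(ℝ^r)`. On an ordinal
coordinate, `R₂*` forces `b ≤ d ≤ c ≤ a`, so `a - b = (a - c) + (c - d) + (d - b)` exceeds
`c - d` unless `a = c` and `b = d`; on a cardinal coordinate the comparison of differences is
exactly what `R₂*` prescribes. Summing coordinatewise inequalities, the sums agree iff every
coordinate does.
-/

lemma sub_eq_sub_iff_of_le {a b c d : ℝ} (hca : c ≤ a) (hbd : b ≤ d) :
    a - b = c - d ↔ a = c ∧ b = d := by
  constructor
  · intro h
    constructor <;> linarith
  · rintro ⟨rfl, rfl⟩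
    rfl

variable {r z : ℕ} {a b c d : Fin r → ℝ}

lemma R1star.symm_iff (h : R1star r a b) : R1star r b a ↔ ∀ j, a j = b j :=
  ⟨fun hba j => le_antisymm (hba j) (h j), fun heq j => (heq j).le⟩

lemma R2star.sub_le (h : R2star r z (a, b) (c, d)) (j : Fin r) : c j - d j ≤ a j - b j := by
  obtain ⟨-, -, hcard, hord⟩ := h
  by_cases hj : (j : ℕ) < z
  · exact hcard j hj
  · obtain ⟨hbd, -, hca⟩ := hord j (not_lt.mp hj)
    exact sub_le_sub hca hbd

lemma R2star.symm_iff (h : R2star r z (a, b) (c, d)) :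
    R2star r z (c, d) (a, b) ↔ ∀ j, a j - b j = c j - d j := by
  obtain ⟨hab, hcd, hcard, hord⟩ := h
  constructor
  · rintro ⟨-, -, hcard', hord'⟩ j
    by_cases hj : (j : ℕ) < z
    · exact le_antisymm (hcard' j hj) (hcard j hj)
    · obtain ⟨hbd, -, hca⟩ := hord j (not_lt.mp hj)
      obtain ⟨hdb, -, hac⟩ := hord' j (not_lt.mp hj)
      exact (sub_eq_sub_iff_of_le hca hbd).2 ⟨le_antisymm hac hca, le_antisymm hbd hdb⟩
  · intro heq
    refine ⟨hcd, hab, fun j _ => (heq j).le, fun j hj => ?_⟩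
    obtain ⟨hbd, -, hca⟩ := hord j hj
    obtain ⟨hac, hbd'⟩ := (sub_eq_sub_iff_of_le hca hbd).1 (heq j)
    exact ⟨hbd'.ge, hab j, hac.le⟩

theorem stmt12_general (r z : ℕ) :
    ∃ u : (Fin r → ℝ) → ℝ, IsRepresentation (R1star r) (R2star r z) u := by
  refine ⟨fun x => ∑ j, x j, fun a b hab => ⟨?_, ?_⟩, fun a b c d h => ⟨?_, ?_⟩⟩
  · exact Finset.sum_le_sum fun j _ => hab j
  · rw [hab.symm_iff, eq_comm, Finset.sum_eq_sum_iff_of_le fun j _ => hab j]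
    simp only [Finset.mem_univ, true_implies, eq_comm]
  · simp only [← Finset.sum_sub_distrib]
    exact Finset.sum_le_sum fun j _ => h.sub_le j
  · simp only [← Finset.sum_sub_distrib, h.symm_iff]
    rw [eq_comm, Finset.sum_eq_sum_iff_of_le fun j _ => h.sub_le j]
    simp only [Finset.mem_univ, true_implies, eq_comm]

/-- Proposition 7 i): `pref(ℝ^r)` is consistent for every `r` and `0 ≤ z ≤ r`. -/
theorem stmt12 (r z : ℕ) (hz : z ≤ r) :
    ∃ u : (Fin r → ℝ) → ℝ, IsRepresentation (R1star r) (R2star r z) u :=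
  stmt12_general r z

end GSD
end

section
/- Let π be a probability measure on (Ω,𝒮₁), r ∈ ℕ, 0 ≤ z ≤ r, and let X = (Δ₁,…,Δ_r), Y = (Λ₁,…,Λ_r) ∈ ℱ_{(pref(ℝ^r),π)} with Δ_j, Λ_j π-integrable for all j = 1,…,r. If (X,Y) ∈ R_{(pref(ℝ^r),π)}, then E_π(Δ_j) ≥ E_π(Λ_j) for all j = 1,…,r. -/
open MeasureTheory
open scoped BigOperators

namespace GSD

/-- Membership in `ℱ_{(𝒜,π)}`: all representation-composites are integrable. -/
def memF {Ω A : Type*} [MeasurableSpace Ω] (π : Measure Ω)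
    (R1 : A → A → Prop) (R2 : A × A → A × A → Prop) (X : Ω → A) : Prop :=
  ∀ u, IsRepresentation R1 R2 u → Integrable (fun ω => u (X ω)) π

/-- The generalized stochastic dominance (GSD) relation `R_{(𝒜,π)}`. -/
def GSDrel {Ω A : Type*} [MeasurableSpace Ω] (π : Measure Ω)
    (R1 : A → A → Prop) (R2 : A × A → A × A → Prop) (X Y : Ω → A) : Prop :=
  ∀ u, IsRepresentation R1 R2 u → ∫ ω, u (Y ω) ∂π ≤ ∫ ω, u (X ω) ∂π

/-!
Every linear functional `x ↦ w ⬝ᵥ x` with strictly positive weights represents `pref(ℝ^r)`,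
whatever `z` is, since `R₂*` only ever compares coordinatewise increments. Taking
`w = e_j + ε 𝟙` in the dominance hypothesis gives `E Λ_j + ε ∑ E Λ_k ≤ E Δ_j + ε ∑ E Δ_k`
for every `ε > 0`, and `ε → 0` yields the claim.
-/

open Matrix Filter Topology

lemma dotProduct_eq_dotProduct_iff_of_le {ι : Type*} [Fintype ι] {w f g : ι → ℝ}
    (hw : ∀ k, 0 < w k) (hfg : f ≤ g) : w ⬝ᵥ f = w ⬝ᵥ g ↔ f = g := by
  rw [dotProduct, dotProduct,
    Finset.sum_eq_sum_iff_of_le fun k _ => mul_le_mul_of_nonneg_left (hfg k) (hw k).le,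
    funext_iff]
  simp [(hw _).ne']

lemma integral_dotProduct {Ω ι : Type*} [MeasurableSpace Ω] [Fintype ι] {μ : Measure Ω}
    (w : ι → ℝ) {V : Ω → ι → ℝ} (hV : ∀ k, Integrable (fun ω => V ω k) μ) :
    ∫ ω, w ⬝ᵥ V ω ∂μ = w ⬝ᵥ fun k => ∫ ω, V ω k ∂μ := by
  simp only [dotProduct]
  rw [integral_finsetSum _ fun k _ => (hV k).const_mul _]
  simp only [integral_const_mul]

lemma le_of_forall_pos_add_mul_le {a b s t : ℝ} (h : ∀ ε > 0, a + ε * s ≤ b + ε * t) :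
    a ≤ b := by
  have hlim : ∀ c d : ℝ, Tendsto (fun ε => c + ε * d) (𝓝[>] 0) (𝓝 c) := fun c d =>
    ((by fun_prop : Continuous fun ε : ℝ => c + ε * d).tendsto' 0 c (by simp)).mono_left
      nhdsWithin_le_nhds
  exact le_of_tendsto_of_tendsto (hlim a s) (hlim b t) (eventually_nhdsWithin_of_forall h)

lemma R2star.sub_le_s14 {r z : ℕ} {p q : (Fin r → ℝ) × (Fin r → ℝ)} (h : R2star r z p q) :
    q.1 - q.2 ≤ p.1 - p.2 := fun k => by
  by_cases hk : (k : ℕ) < z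
  · exact h.2.2.1 k hk
  · obtain ⟨h₁, h₂, h₃⟩ := h.2.2.2 k (not_lt.mp hk)
    simp only [Pi.sub_apply]
    linarith

lemma R2star.swap_iff {r z : ℕ} {p q : (Fin r → ℝ) × (Fin r → ℝ)} (h : R2star r z p q) :
    R2star r z q p ↔ p.1 - p.2 = q.1 - q.2 := by
  refine ⟨fun h' => le_antisymm h'.sub_le_s14 h.sub_le_s14, fun heq => ?_⟩
  have heq_at (k : Fin r) : p.1 k - p.2 k = q.1 k - q.2 k := congrFun heq k
  refine ⟨h.2.1, h.1, fun k _ => (heq_at k).le, fun k hk => ?_⟩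
  obtain ⟨h₁, h₂, h₃⟩ := h.2.2.2 k hk
  have := heq_at k
  exact ⟨by linarith, by linarith, by linarith⟩

lemma isRepresentation_dotProduct (r z : ℕ) {w : Fin r → ℝ} (hw : ∀ k, 0 < w k) :
    IsRepresentation (R1star r) (R2star r z) (w ⬝ᵥ ·) := by
  have hw₀ : 0 ≤ w := fun k => (hw k).le
  refine ⟨fun a b hab => ?_, fun a b c d h => ?_⟩
  · refine ⟨dotProduct_le_dotProduct_of_nonneg_left hab hw₀, ?_⟩
    rw [eq_comm, dotProduct_eq_dotProduct_iff_of_le hw hab]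
    exact ⟨fun hba => hba.ge, fun hba => le_antisymm hab hba⟩
  · rw [← dotProduct_sub, ← dotProduct_sub, eq_comm,
      dotProduct_eq_dotProduct_iff_of_le hw h.sub_le_s14, h.swap_iff, eq_comm]
    exact ⟨dotProduct_le_dotProduct_of_nonneg_left h.sub_le_s14 hw₀, Iff.rfl⟩

theorem stmt14_general {Ω : Type*} [MeasurableSpace Ω] (π : Measure Ω)
    (r z : ℕ) (X Y : Ω → (Fin r → ℝ))
    (hXi : ∀ j, Integrable (fun ω => X ω j) π) (hYi : ∀ j, Integrable (fun ω => Y ω j) π)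
    (hGSD : GSDrel π (R1star r) (R2star r z) X Y) :
    ∀ j, ∫ ω, Y ω j ∂π ≤ ∫ ω, X ω j ∂π := by
  intro j
  refine le_of_forall_pos_add_mul_le (s := ∑ k, ∫ ω, Y ω k ∂π) (t := ∑ k, ∫ ω, X ω k ∂π)
    fun ε hε => ?_
  have hw : ∀ k, 0 < (Pi.single j 1 + ε • 1 : Fin r → ℝ) k := fun k =>
    add_pos_of_nonneg_of_pos (Pi.single_nonneg (α := fun _ => ℝ).2 zero_le_one k)
      (by simpa using hε)
  have h := hGSD _ (isRepresentation_dotProduct r z hw)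
  rw [integral_dotProduct _ hXi, integral_dotProduct _ hYi] at h
  simpa only [add_dotProduct, single_dotProduct, smul_dotProduct, one_dotProduct, one_mul,
    smul_eq_mul] using h

/-- Proposition 7 iii) I.: GSD on `pref(ℝ^r)` implies componentwise dominance in expectation. -/
theorem stmt14 {Ω : Type*} [MeasurableSpace Ω] (π : Measure Ω) [IsProbabilityMeasure π]
    (r z : ℕ) (hz : z ≤ r) (X Y : Ω → (Fin r → ℝ))
    (hX : memF π (R1star r) (R2star r z) X) (hY : memF π (R1star r) (R2star r z) Y)
    (hXi : ∀ j, Integrable (fun ω => X ω j) π) (hYi : ∀ j, Integrable (fun ω => Y ω j) π)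
    (hGSD : GSDrel π (R1star r) (R2star r z) X Y) :
    ∀ j, ∫ ω, Y ω j ∂π ≤ ∫ ω, X ω j ∂π :=
  stmt14_general π r z X Y hXi hYi hGSD

end GSD
end

section
/- Let π be a probability measure on (Ω,𝒮₁), r ∈ ℕ, 0 ≤ z ≤ r, and let X = (Δ₁,…,Δ_r), Y = (Λ₁,…,Λ_r) ∈ ℱ_{(pref(ℝ^r),π)} with Δ_j, Λ_j π-integrable for all j, such that Δ₁,…,Δ_r are jointly independent and Λ₁,…,Λ_r are jointly independent. If (I) E_π(Δ_j) ≥ E_π(Λ_j) for all j = 1,…,r and (II) for all j = z+1,…,r, E_π(u∘Δ_j) ≥ E_π(u∘Λ_j) for every bounded nondecreasing measurable u : ℝ → ℝ, then (X,Y) ∈ R_{(pref(ℝ^r),π)}. -/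
/-!
Every representation `u` of `pref(ℝ^r)` is additively separable. The `R₂*`-indifferences make the
increment of `u` along a cardinal coordinate independent of the base point, and an additive
monotone function of one real variable is linear, so `u x = u (ordinalPart z x) + ∑ⱼ cⱼ xⱼ` with
`cⱼ ≥ 0`. Condition (I) takes care of the linear part.

The ordinal part `u ∘ ordinalPart z` is monotone. By independence its expectation is an integral
against the product of the marginal laws, and (II) passes to the product one coordinate at a time
by Fubini. A monotone function on `ℝⁿ` need not be Borel, so this needs its a.e.-measurability for
product measures: in the first variable it is squeezed between two measurable envelopes built over
a countable dense set containing the atoms, and these differ only at jump points, which are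
countably many non-atoms. Unbounded functions are reached by truncation.
-/

open MeasureTheory
open scoped BigOperators

namespace GSD

theorem eq_mul_of_map_add_of_monotone {f : ℝ → ℝ} (hadd : ∀ s t, f (s + t) = f s + f t)
    (hmono : Monotone f) (t : ℝ) : f t = f 1 * t := by
  have hrat (q : ℚ) : f q = f 1 * q := by
    simpa [mul_comm] using map_ratCast_smul (AddMonoidHom.mk' f hadd) ℝ ℝ q 1
  obtain ⟨u, -, hu, hu_lim⟩ := Real.exists_seq_rat_strictMono_tendsto t
  obtain ⟨v, -, hv, hv_lim⟩ := Real.exists_seq_rat_strictAnti_tendsto t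
  apply le_antisymm
  · exact ge_of_tendsto' (hv_lim.const_mul (f 1)) fun n => hrat (v n) ▸ hmono (hv n).le
  · exact le_of_tendsto' (hu_lim.const_mul (f 1)) fun n => hrat (u n) ▸ hmono (hu n).le

def ordinalPart {r : ℕ} (z : ℕ) (x : Fin r → ℝ) : Fin r → ℝ :=
  fun j => if (j : ℕ) < z then 0 else x j

theorem ordinalPart_add_sum_single {r z : ℕ} (x : Fin r → ℝ) :
    ordinalPart z x + ∑ j ∈ Finset.univ.filter (fun j : Fin r => (j : ℕ) < z),
      Pi.single j (x j) = x := by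
  ext k
  by_cases hk : (k : ℕ) < z <;> simp [ordinalPart, Finset.sum_apply, Pi.single_apply, hk]

namespace IsRepresentation

variable {r z : ℕ} {u : (Fin r → ℝ) → ℝ}

theorem monotone (hu : IsRepresentation (R1star r) (R2star r z) u) : Monotone u :=
  fun x y h => (hu.1 y x h).1

/-- The two pairs are `R₂*`-related in both directions. -/
theorem sub_eq_sub (hu : IsRepresentation (R1star r) (R2star r z) u) {a b c d : Fin r → ℝ}
    (hba : b ≤ a) (hdc : d ≤ c) (hcard : ∀ j : Fin r, (j : ℕ) < z → a j - b j = c j - d j)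
    (hord : ∀ j : Fin r, z ≤ (j : ℕ) → a j = c j ∧ b j = d j) :
    u a - u b = u c - u d := by
  refine ((hu.2 a b c d ⟨hba, hdc, fun j hj => (hcard j hj).ge, fun j hj => ?_⟩).2).2
    ⟨hdc, hba, fun j hj => (hcard j hj).le, fun j hj => ?_⟩
  · obtain ⟨hac, hbd⟩ := hord j hj
    exact ⟨hbd.le, hdc j, hac.ge⟩
  · obtain ⟨hac, hbd⟩ := hord j hj
    exact ⟨hbd.ge, hba j, hac.le⟩

theorem map_add_single_sub_eq (hu : IsRepresentation (R1star r) (R2star r z) u) {j : Fin r}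
    (hj : (j : ℕ) < z) {t : ℝ} (ht : 0 ≤ t) (x y : Fin r → ℝ) :
    u (x + Pi.single j t) - u x = u (y + Pi.single j t) - u y := by
  set e : Fin r → ℝ := Pi.single j t
  have he : 0 ≤ e := Pi.single_nonneg.2 ht
  have he_ord : ∀ k : Fin r, z ≤ (k : ℕ) → e k = 0 :=
    fun k hk => by simp [e, show k ≠ j by rintro rfl; omega]
  have same_ord : ∀ x y : Fin r → ℝ, (∀ k : Fin r, z ≤ (k : ℕ) → x k = y k) →
      u (x + e) - u x = u (y + e) - u y := fun x y hxy =>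
    hu.sub_eq_sub (le_add_of_nonneg_right he) (le_add_of_nonneg_right he)
      (fun k _ => by simp) (fun k hk => by simp [hxy k hk])
  have raise_ord : ∀ x x' : Fin r → ℝ, x ≤ x' → (∀ k : Fin r, (k : ℕ) < z → x k = x' k) →
      u (x' + e) - u x' = u (x + e) - u x := fun x x' hxx' hcard => by
    have := hu.sub_eq_sub (a := x') (c := x' + e) hxx' (add_le_add_left hxx' e)
      (fun k hk => by simp [hcard k hk]) (fun k hk => by simp [he_ord k hk])
    linarith
  -- join `x` to `y` through points with common ordinal coordinates `max x y`
  set s : Fin r → ℝ := fun k => if (k : ℕ) < z then x k else max (x k) (y k)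
  set s' : Fin r → ℝ := fun k => if (k : ℕ) < z then y k else max (x k) (y k)
  have hs : x ≤ s := fun k => by dsimp only [s]; split_ifs <;> simp
  have hs' : y ≤ s' := fun k => by dsimp only [s']; split_ifs <;> simp
  calc u (x + e) - u x = u (s + e) - u s := (raise_ord x s hs fun k hk => by simp [s, hk]).symm
    _ = u (s' + e) - u s' := same_ord s s' fun k hk => by simp [s, s', Nat.not_lt.2 hk]
    _ = u (y + e) - u y := raise_ord y s' hs' fun k hk => by simp [s', hk]

theorem map_add_single (hu : IsRepresentation (R1star r) (R2star r z) u) {j : Fin r}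
    (hj : (j : ℕ) < z) (x : Fin r → ℝ) (t : ℝ) :
    u (x + Pi.single j t) = u x + (u (Pi.single j 1) - u 0) * t := by
  set F : ℝ → ℝ := fun t => u (Pi.single j t) - u 0
  have hF : ∀ x t, u (x + Pi.single j t) - u x = F t := by
    intro x t
    rcases le_total 0 t with ht | ht
    · simpa [F] using hu.map_add_single_sub_eq hj ht x 0
    · have h1 := hu.map_add_single_sub_eq hj (neg_nonneg.2 ht) (x + Pi.single j t) 0
      have h2 := hu.map_add_single_sub_eq hj (neg_nonneg.2 ht) (Pi.single j t) 0
      simp only [add_assoc, ← Pi.single_add, add_neg_cancel, Pi.single_zero, add_zero,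
        zero_add] at h1 h2
      simp only [F]
      linarith
  have hadd : ∀ s t, F (s + t) = F s + F t := fun s t => by
    have := hF (Pi.single j s) t
    simp only [← Pi.single_add, F] at this ⊢
    linarith
  have hmono : Monotone F := fun s t hst => sub_le_sub_right (hu.monotone (Pi.single_mono j hst)) _
  linarith [hF x t, eq_mul_of_map_add_of_monotone hadd hmono t]

theorem exists_eq_ordinalPart_add_sum (hu : IsRepresentation (R1star r) (R2star r z) u) :
    ∃ c : Fin r → ℝ, (∀ j, 0 ≤ c j) ∧ ∀ x, u x = u (ordinalPart z x) + ∑ j, c j * x j := by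
  set c : Fin r → ℝ := fun j => if (j : ℕ) < z then u (Pi.single j 1) - u 0 else 0
  refine ⟨c, fun j => ?_, fun x => ?_⟩
  · by_cases hj : (j : ℕ) < z
    · simpa [c, hj] using hu.monotone (Pi.single_nonneg.2 zero_le_one)
    · simp [c, hj]
  have hsum : ∀ s : Finset (Fin r), (∀ j ∈ s, (j : ℕ) < z) → ∀ y,
      u (y + ∑ j ∈ s, Pi.single j (x j)) = u y + ∑ j ∈ s, c j * x j := by
    intro s
    induction s using Finset.induction_on with
    | empty => simp
    | insert a s ha ih =>
      intro hs y
      have ha_card := hs a (Finset.mem_insert_self a s)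
      rw [Finset.sum_insert ha, Finset.sum_insert ha, ← add_assoc, add_right_comm,
        hu.map_add_single ha_card, ih fun j hj => hs j (Finset.mem_insert_of_mem hj)]
      simp only [c, if_pos ha_card]
      ring
  conv_lhs => rw [← ordinalPart_add_sum_single (z := z) x]
  rw [hsum _ fun j hj => (Finset.mem_filter.1 hj).2, Finset.sum_filter_of_ne]
  intro j _ hj
  by_contra h
  simp [c, h] at hj

end IsRepresentation

section MonotoneEnvelope

variable {Q : Set ℝ} {f : ℝ → ℝ} {m t : ℝ}

theorem _root_.Monotone.ite_le (hf : Monotone f) (hm : m ≤ f t) (q : Q) :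
    (if (q : ℝ) ≤ t then f q else m) ≤ f t := by
  split_ifs with h
  exacts [hf h, hm]

theorem _root_.Monotone.le_ite (hf : Monotone f) (hm : f t ≤ m) (q : Q) :
    f t ≤ if t ≤ (q : ℝ) then f q else m := by
  split_ifs with h
  exacts [hf h, hm]

theorem _root_.Monotone.iSup_ite_le [Nonempty Q] (hf : Monotone f) (hm : m ≤ f t) :
    (⨆ q : Q, if (q : ℝ) ≤ t then f q else m) ≤ f t :=
  ciSup_le (hf.ite_le hm)

theorem _root_.Monotone.le_iInf_ite [Nonempty Q] (hf : Monotone f) (hm : f t ≤ m) :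
    f t ≤ ⨅ q : Q, if t ≤ (q : ℝ) then f q else m :=
  le_ciInf (hf.le_ite hm)

theorem _root_.Monotone.le_iSup_ite (hf : Monotone f) (hm : m ≤ f t)
    (hQ : Set.range ((↑) : ℚ → ℝ) ⊆ Q) (ht : t ∈ Q ∨ ContinuousAt f t) :
    f t ≤ ⨆ q : Q, if (q : ℝ) ≤ t then f q else m := by
  have hbdd : BddAbove (Set.range fun q : Q => if (q : ℝ) ≤ t then f q else m) :=
    ⟨f t, Set.forall_mem_range.2 (hf.ite_le hm)⟩
  have hterm : ∀ q : Q, (q : ℝ) ≤ t → f q ≤ ⨆ q : Q, if (q : ℝ) ≤ t then f q else m :=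
    fun q hq => by simpa [hq] using le_ciSup hbdd q
  rcases ht with ht | ht
  · exact hterm ⟨t, ht⟩ le_rfl
  · obtain ⟨u, -, hu, hu_lim⟩ := Real.exists_seq_rat_strictMono_tendsto t
    exact le_of_tendsto' (ht.tendsto.comp hu_lim) fun n => hterm ⟨u n, hQ ⟨u n, rfl⟩⟩ (hu n).le

theorem _root_.Monotone.iInf_ite_le (hf : Monotone f) (hm : f t ≤ m)
    (hQ : Set.range ((↑) : ℚ → ℝ) ⊆ Q) (ht : t ∈ Q ∨ ContinuousAt f t) :
    (⨅ q : Q, if t ≤ (q : ℝ) then f q else m) ≤ f t := by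
  have hbdd : BddBelow (Set.range fun q : Q => if t ≤ (q : ℝ) then f q else m) :=
    ⟨f t, Set.forall_mem_range.2 (hf.le_ite hm)⟩
  have hterm : ∀ q : Q, t ≤ (q : ℝ) → (⨅ q : Q, if t ≤ (q : ℝ) then f q else m) ≤ f q :=
    fun q hq => by simpa [hq] using ciInf_le hbdd q
  rcases ht with ht | ht
  · exact hterm ⟨t, ht⟩ le_rfl
  · obtain ⟨u, -, hu, hu_lim⟩ := Real.exists_seq_rat_strictAnti_tendsto t
    exact ge_of_tendsto' (ht.tendsto.comp hu_lim) fun n => hterm ⟨u n, hQ ⟨u n, rfl⟩⟩ (hu n).le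

end MonotoneEnvelope

theorem aemeasurable_of_monotone_left {β : Type*} [MeasurableSpace β] (ρ : Measure ℝ) [SFinite ρ]
    (κ : Measure β) [SFinite κ] {H : ℝ × β → ℝ} {M : ℝ} (hbound : ∀ p, |H p| ≤ M)
    (hmono : ∀ b, Monotone fun t => H (t, b))
    (hsec : ∀ t, AEMeasurable (fun b => H (t, b)) κ) : AEMeasurable H (ρ.prod κ) := by
  -- `Q` contains the atoms of `ρ`, so that the measurable envelopes below agree with `H` there
  set Q : Set ℝ := Set.range ((↑) : ℚ → ℝ) ∪ {t | 0 < ρ {t}}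
  have hQ : Q.Countable := (Set.countable_range _).union
    (Measure.countable_meas_pos_of_disjoint_iUnion (fun t => measurableSet_singleton t)
      fun s t hst => Set.disjoint_singleton.2 hst)
  have : Countable Q := hQ.to_subtype
  have : Nonempty Q := ⟨⟨0, Or.inl ⟨0, Rat.cast_zero⟩⟩⟩
  set v : Q → β → ℝ := fun q => (hsec q).mk
  set L : ℝ × β → ℝ := fun p => ⨆ q : Q, if (q : ℝ) ≤ p.1 then v q p.2 else -M
  set R : ℝ × β → ℝ := fun p => ⨅ q : Q, if p.1 ≤ (q : ℝ) then v q p.2 else M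
  have hL : Measurable L := Measurable.iSup fun q =>
    Measurable.ite (measurableSet_le measurable_const measurable_fst)
      ((hsec q).measurable_mk.comp measurable_snd) measurable_const
  have hR : Measurable R := Measurable.iInf fun q =>
    Measurable.ite (measurableSet_le measurable_fst measurable_const)
      ((hsec q).measurable_mk.comp measurable_snd) measurable_const
  have hgood : ∀ᵐ b ∂κ, ∀ q : Q, v q b = H (q, b) :=
    ae_all_iff.2 fun q => (hsec q).ae_eq_mk.symm
  have hLR : ∀ b, (∀ q : Q, v q b = H (q, b)) → ∀ t,
      L (t, b) ≤ H (t, b) ∧ H (t, b) ≤ R (t, b) ∧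
      (t ∈ Q ∨ ContinuousAt (fun s => H (s, b)) t → R (t, b) ≤ L (t, b)) := by
    intro b hb t
    obtain ⟨hlo, hhi⟩ := abs_le.1 (hbound (t, b))
    simp only [L, R, hb]
    exact ⟨(hmono b).iSup_ite_le hlo, (hmono b).le_iInf_ite hhi, fun ht =>
      ((hmono b).iInf_ite_le hhi Set.subset_union_left ht).trans
        ((hmono b).le_iSup_ite hlo Set.subset_union_left ht)⟩
  have hRL : ∀ᵐ p ∂ρ.prod κ, R p ≤ L p := by
    rw [Measure.ae_prod_iff_ae_ae (measurableSet_le hR hL),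
      Measure.ae_ae_comm (p := fun t b => R (t, b) ≤ L (t, b)) (measurableSet_le hR hL)]
    filter_upwards [hgood] with b hb
    set N := {t | ¬ContinuousAt (fun s => H (s, b)) t} \ Q
    have hN : ρ N = 0 := by
      rw [← Set.biUnion_of_singleton N,
        measure_biUnion_null_iff ((hmono b).countable_not_continuousAt.mono Set.sdiff_subset)]
      intro t ht
      by_contra h
      exact ht.2 (Or.inr (pos_iff_ne_zero.2 h))
    filter_upwards [measure_eq_zero_iff_ae_notMem.1 hN] with t ht
    exact (hLR b hb t).2.2 <| or_iff_not_imp_left.2 fun htQ => not_not.1 fun hc => ht ⟨hc, htQ⟩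
  refine ⟨L, hL, ?_⟩
  filter_upwards [hRL, Measure.quasiMeasurePreserving_snd.ae hgood] with p hp hpb
  obtain ⟨hLH, hHR, -⟩ := hLR p.2 hpb p.1
  exact le_antisymm (hHR.trans hp) hLH

section FinCons

variable {n : ℕ} (μ : Fin (n + 1) → Measure ℝ) [∀ i, SigmaFinite (μ i)]

theorem measurePreserving_piFinSuccAbove_zero_symm :
    MeasurePreserving (MeasurableEquiv.piFinSuccAbove (fun _ => ℝ) 0).symm
      ((μ 0).prod (Measure.pi fun j => μ j.succ)) (Measure.pi μ) := by
  simpa using (measurePreserving_piFinSuccAbove μ 0).symm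

theorem comp_piFinSuccAbove_zero_symm (G : (Fin (n + 1) → ℝ) → ℝ) :
    G ∘ (MeasurableEquiv.piFinSuccAbove (fun _ => ℝ) 0).symm =
      fun p : ℝ × (Fin n → ℝ) => G (Fin.cons p.1 p.2) :=
  funext fun p => congrArg G (Fin.insertNth_zero' p.1 p.2)

theorem integral_pi_eq_integral_prod_cons (G : (Fin (n + 1) → ℝ) → ℝ) :
    ∫ x, G x ∂Measure.pi μ =
      ∫ p, G (Fin.cons p.1 p.2) ∂(μ 0).prod (Measure.pi fun j => μ j.succ) := by
  rw [← (measurePreserving_piFinSuccAbove_zero_symm μ).integral_comp', ←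
    comp_piFinSuccAbove_zero_symm]
  rfl

theorem aemeasurable_pi_iff_prod_cons {G : (Fin (n + 1) → ℝ) → ℝ} :
    AEMeasurable G (Measure.pi μ) ↔
      AEMeasurable (fun p => G (Fin.cons p.1 p.2)) ((μ 0).prod (Measure.pi fun j => μ j.succ)) := by
  rw [← comp_piFinSuccAbove_zero_symm,
    (measurePreserving_piFinSuccAbove_zero_symm μ).aemeasurable_comp_iff
      (MeasurableEquiv.measurableEmbedding _)]

end FinCons

theorem aemeasurable_pi_of_monotone {n : ℕ} {G : (Fin n → ℝ) → ℝ} (hG : Monotone G) {M : ℝ}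
    (hbound : ∀ x, |G x| ≤ M) (μ : Fin n → Measure ℝ) [∀ i, SigmaFinite (μ i)] :
    AEMeasurable G (Measure.pi μ) := by
  induction n with
  | zero => exact (Subsingleton.measurable (α := Fin 0 → ℝ)).aemeasurable
  | succ n ih =>
    rw [aemeasurable_pi_iff_prod_cons]
    exact aemeasurable_of_monotone_left _ _ (fun p => hbound _)
      (fun y s t hst => hG (Fin.cons_le_cons.2 ⟨hst, le_rfl⟩))
      (fun t => ih (fun x y hxy => hG (Fin.cons_le_cons.2 ⟨le_rfl, hxy⟩)) (fun _ => hbound _) _)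

def StochDominates (μ ν : Measure ℝ) : Prop :=
  ∀ φ : ℝ → ℝ, Monotone φ → ∀ M, (∀ t, |φ t| ≤ M) → ∫ t, φ t ∂ν ≤ ∫ t, φ t ∂μ

section ProdIntegral

variable {α β : Type*} [MeasurableSpace α] [MeasurableSpace β] {H : α × β → ℝ} {M : ℝ}

theorem integral_prod_le_of_le_right (ρ : Measure α) [IsFiniteMeasure ρ] {κ₁ κ₂ : Measure β}
    [IsFiniteMeasure κ₁] [IsFiniteMeasure κ₂] (hbound : ∀ p, |H p| ≤ M)
    (h₁ : AEMeasurable H (ρ.prod κ₁)) (h₂ : AEMeasurable H (ρ.prod κ₂))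
    (hle : ∀ t, ∫ b, H (t, b) ∂κ₂ ≤ ∫ b, H (t, b) ∂κ₁) :
    ∫ p, H p ∂ρ.prod κ₂ ≤ ∫ p, H p ∂ρ.prod κ₁ := by
  have hint₁ : Integrable H (ρ.prod κ₁) := .of_bound h₁.aestronglyMeasurable M (ae_of_all _ hbound)
  have hint₂ : Integrable H (ρ.prod κ₂) := .of_bound h₂.aestronglyMeasurable M (ae_of_all _ hbound)
  rw [integral_prod _ hint₁, integral_prod _ hint₂]
  exact integral_mono hint₂.integral_prod_left hint₁.integral_prod_left hle

end ProdIntegral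

theorem integral_prod_le_of_stochDominates_left {β : Type*} [MeasurableSpace β]
    {μ₀ ν₀ : Measure ℝ} [IsFiniteMeasure μ₀] [IsFiniteMeasure ν₀] (κ : Measure β)
    [IsFiniteMeasure κ] (h : StochDominates μ₀ ν₀) {H : ℝ × β → ℝ} {M : ℝ}
    (hbound : ∀ p, |H p| ≤ M) (hmono : ∀ b, Monotone fun t => H (t, b))
    (hμ : AEMeasurable H (μ₀.prod κ)) (hν : AEMeasurable H (ν₀.prod κ)) :
    ∫ p, H p ∂ν₀.prod κ ≤ ∫ p, H p ∂μ₀.prod κ := by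
  have hintμ : Integrable H (μ₀.prod κ) := .of_bound hμ.aestronglyMeasurable M (ae_of_all _ hbound)
  have hintν : Integrable H (ν₀.prod κ) := .of_bound hν.aestronglyMeasurable M (ae_of_all _ hbound)
  rw [integral_prod_symm _ hintμ, integral_prod_symm _ hintν]
  exact integral_mono hintν.integral_prod_right hintμ.integral_prod_right
    fun b => h _ (hmono b) M fun t => hbound _

theorem integral_pi_le_of_stochDominates {n : ℕ} {G : (Fin n → ℝ) → ℝ} (hG : Monotone G)
    {M : ℝ} (hbound : ∀ x, |G x| ≤ M) (μ ν : Fin n → Measure ℝ)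
    [∀ i, IsProbabilityMeasure (μ i)] [∀ i, IsProbabilityMeasure (ν i)]
    (h : ∀ i, StochDominates (μ i) (ν i)) :
    ∫ x, G x ∂Measure.pi ν ≤ ∫ x, G x ∂Measure.pi μ := by
  induction n with
  | zero => exact le_of_eq (by rw [Measure.pi_of_empty ν, Measure.pi_of_empty μ])
  | succ n ih =>
    set H : ℝ × (Fin n → ℝ) → ℝ := fun p => G (Fin.cons p.1 p.2)
    have hH_bound : ∀ p, |H p| ≤ M := fun p => hbound _
    have hH_mono₁ : ∀ y, Monotone fun t => H (t, y) :=
      fun y s t hst => hG (Fin.cons_le_cons.2 ⟨hst, le_rfl⟩)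
    have hH_mono₂ : ∀ t, Monotone fun y => H (t, y) :=
      fun t x y hxy => hG (Fin.cons_le_cons.2 ⟨le_rfl, hxy⟩)
    have hH_meas : ∀ (ρ : Measure ℝ) [IsProbabilityMeasure ρ] (κ : Fin n → Measure ℝ)
        [∀ i, IsProbabilityMeasure (κ i)], AEMeasurable H (ρ.prod (Measure.pi κ)) :=
      fun ρ _ κ _ => aemeasurable_of_monotone_left _ _ hH_bound hH_mono₁
        fun t => aemeasurable_pi_of_monotone (hH_mono₂ t) (fun _ => hbound _) κ
    rw [integral_pi_eq_integral_prod_cons, integral_pi_eq_integral_prod_cons]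
    calc ∫ p, H p ∂(ν 0).prod (Measure.pi fun j => ν j.succ)
        ≤ ∫ p, H p ∂(ν 0).prod (Measure.pi fun j => μ j.succ) :=
          integral_prod_le_of_le_right _ hH_bound (hH_meas _ _) (hH_meas _ _)
            fun t => ih (hH_mono₂ t) (fun _ => hbound _) _ _ fun j => h j.succ
      _ ≤ ∫ p, H p ∂(μ 0).prod (Measure.pi fun j => μ j.succ) :=
          integral_prod_le_of_stochDominates_left _ (h 0) hH_bound hH_mono₁
            (hH_meas _ _) (hH_meas _ _)

section Truncation

variable {k x : ℝ}

theorem abs_max_neg_min_le (hk : 0 ≤ k) : |max (-k) (min k x)| ≤ k :=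
  abs_le.2 ⟨le_max_left _ _, max_le (by linarith) (min_le_left _ _)⟩

theorem abs_max_neg_min_le_abs (hk : 0 ≤ k) : |max (-k) (min k x)| ≤ |x| :=
  abs_le.2 ⟨le_max_of_le_right (le_min (by linarith [abs_nonneg x]) (neg_abs_le x)),
    max_le (by linarith [abs_nonneg x]) ((min_le_right _ _).trans (le_abs_self x))⟩

theorem max_neg_min_eq (h : |x| ≤ k) : max (-k) (min k x) = x := by
  obtain ⟨h₁, h₂⟩ := abs_le.1 h
  rw [min_eq_right h₂, max_eq_right h₁]

theorem tendsto_integral_max_neg_min {α : Type*} [MeasurableSpace α] {μ : Measure α}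
    {f : α → ℝ} (hf : Integrable f μ) :
    Filter.Tendsto (fun k : ℕ => ∫ a, max (-(k : ℝ)) (min (k : ℝ) (f a)) ∂μ) Filter.atTop
      (nhds (∫ a, f a ∂μ)) := by
  refine tendsto_integral_of_dominated_convergence (fun a => |f a|)
    (fun k => (continuous_const.max (continuous_const.min continuous_id)).comp_aestronglyMeasurable
      hf.aestronglyMeasurable) hf.abs
    (fun k => ae_of_all _ fun a => abs_max_neg_min_le_abs (Nat.cast_nonneg k))
    (ae_of_all _ fun a => tendsto_const_nhds.congr' ?_)
  filter_upwards [Filter.eventually_ge_atTop ⌈|f a|⌉₊] with k hk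
  exact (max_neg_min_eq ((Nat.le_ceil _).trans (Nat.cast_le.2 hk))).symm

end Truncation

section RandomVector

variable {Ω : Type*} [MeasurableSpace Ω] {π : Measure Ω} [IsProbabilityMeasure π] {n : ℕ}
  {X Y : Ω → Fin n → ℝ} {G : (Fin n → ℝ) → ℝ}

theorem integral_comp_eq_integral_pi (hXm : ∀ j, Measurable fun ω => X ω j)
    (hXind : ProbabilityTheory.iIndepFun (fun j ω => X ω j) π) (hG : Monotone G) {M : ℝ}
    (hbound : ∀ x, |G x| ≤ M) :
    ∫ ω, G (X ω) ∂π = ∫ x, G x ∂Measure.pi fun j => π.map fun ω => X ω j := by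
  have : ∀ j, IsProbabilityMeasure (π.map fun ω => X ω j) :=
    fun j => Measure.isProbabilityMeasure_map (hXm j).aemeasurable
  have hlaw := hXind.map_fun_eq_pi_map fun j => (hXm j).aemeasurable
  have hG_meas : AEStronglyMeasurable G (π.map fun ω j => X ω j) :=
    hlaw ▸ (aemeasurable_pi_of_monotone hG hbound _).aestronglyMeasurable
  rw [← hlaw, integral_map (measurable_pi_lambda _ hXm).aemeasurable hG_meas]

theorem integral_comp_le_of_iIndepFun (hXm : ∀ j, Measurable fun ω => X ω j)
    (hYm : ∀ j, Measurable fun ω => Y ω j)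
    (hXind : ProbabilityTheory.iIndepFun (fun j ω => X ω j) π)
    (hYind : ProbabilityTheory.iIndepFun (fun j ω => Y ω j) π)
    (hdom : ∀ j, StochDominates (π.map fun ω => X ω j) (π.map fun ω => Y ω j))
    (hG : Monotone G) (hGX : Integrable (fun ω => G (X ω)) π)
    (hGY : Integrable (fun ω => G (Y ω)) π) :
    ∫ ω, G (Y ω) ∂π ≤ ∫ ω, G (X ω) ∂π := by
  refine le_of_tendsto_of_tendsto' (tendsto_integral_max_neg_min hGY)
    (tendsto_integral_max_neg_min hGX) fun k => ?_
  have hGk : Monotone fun x => max (-(k : ℝ)) (min (k : ℝ) (G x)) :=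
    fun x y hxy => max_le_max le_rfl (min_le_min le_rfl (hG hxy))
  have hbound : ∀ x, |max (-(k : ℝ)) (min (k : ℝ) (G x))| ≤ k :=
    fun x => abs_max_neg_min_le (Nat.cast_nonneg k)
  have : ∀ j, IsProbabilityMeasure (π.map fun ω => X ω j) :=
    fun j => Measure.isProbabilityMeasure_map (hXm j).aemeasurable
  have : ∀ j, IsProbabilityMeasure (π.map fun ω => Y ω j) :=
    fun j => Measure.isProbabilityMeasure_map (hYm j).aemeasurable
  rw [integral_comp_eq_integral_pi hXm hXind hGk hbound,
    integral_comp_eq_integral_pi hYm hYind hGk hbound]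
  exact integral_pi_le_of_stochDominates hGk hbound _ _ hdom

end RandomVector

theorem integrable_and_integral_comp_eq_add_sum {Ω : Type*} [MeasurableSpace Ω] {π : Measure Ω}
    {r : ℕ} {u G : (Fin r → ℝ) → ℝ} {c : Fin r → ℝ} (hu : ∀ x, u x = G x + ∑ j, c j * x j)
    {Z : Ω → Fin r → ℝ} (hZu : Integrable (fun ω => u (Z ω)) π)
    (hZ : ∀ j, Integrable (fun ω => Z ω j) π) :
    Integrable (fun ω => G (Z ω)) π ∧
      ∫ ω, u (Z ω) ∂π = ∫ ω, G (Z ω) ∂π + ∑ j, c j * ∫ ω, Z ω j ∂π := by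
  have hlin : Integrable (fun ω => ∑ j, c j * Z ω j) π :=
    integrable_finsetSum _ fun j _ => (hZ j).const_mul _
  have hGZ : Integrable (fun ω => G (Z ω)) π :=
    (hZu.sub hlin).congr (ae_of_all _ fun ω => by simp [hu])
  refine ⟨hGZ, ?_⟩
  simp only [hu]
  rw [integral_add hGZ hlin, integral_finsetSum _ fun j _ => (hZ j).const_mul _]
  simp only [integral_const_mul]

theorem stmt16_general {Ω : Type*} [MeasurableSpace Ω] (π : Measure Ω) [IsProbabilityMeasure π]
    (r z : ℕ) (X Y : Ω → (Fin r → ℝ))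
    (hX : memF π (R1star r) (R2star r z) X) (hY : memF π (R1star r) (R2star r z) Y)
    (hXi : ∀ j, Integrable (fun ω => X ω j) π) (hYi : ∀ j, Integrable (fun ω => Y ω j) π)
    (hXm : ∀ j, Measurable fun ω => X ω j) (hYm : ∀ j, Measurable fun ω => Y ω j)
    (hXind : ProbabilityTheory.iIndepFun
      (fun j ω => X ω j) π)
    (hYind : ProbabilityTheory.iIndepFun
      (fun j ω => Y ω j) π)
    (hI : ∀ j, ∫ ω, Y ω j ∂π ≤ ∫ ω, X ω j ∂π)
    (hII : ∀ j : Fin r, z ≤ (j : ℕ) →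
      ∀ u : ℝ → ℝ, Measurable u → Monotone u → (∃ B, ∀ t, |u t| ≤ B) →
        ∫ ω, u (Y ω j) ∂π ≤ ∫ ω, u (X ω j) ∂π) :
    GSDrel π (R1star r) (R2star r z) X Y := by
  intro u hu
  obtain ⟨c, hc, hu_eq⟩ := hu.exists_eq_ordinalPart_add_sum
  obtain ⟨hGX, hX_eq⟩ := integrable_and_integral_comp_eq_add_sum hu_eq (hX u hu) hXi
  obtain ⟨hGY, hY_eq⟩ := integrable_and_integral_comp_eq_add_sum hu_eq (hY u hu) hYi
  rw [hX_eq, hY_eq]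
  refine add_le_add ?_ (Finset.sum_le_sum fun j _ => mul_le_mul_of_nonneg_left (hI j) (hc j))
  set o : Fin r → ℝ → ℝ := fun j t => if (j : ℕ) < z then 0 else t
  have ho : ∀ j, Measurable (o j) := fun j => by
    by_cases hj : (j : ℕ) < z <;> simp [o, hj, measurable_id']
  have hdom : ∀ j, StochDominates (π.map fun ω => ordinalPart z (X ω) j)
      (π.map fun ω => ordinalPart z (Y ω) j) := by
    intro j φ hφ M hM
    by_cases hj : (j : ℕ) < z
    · simp [ordinalPart, hj]
    · simp only [ordinalPart, hj, if_false]
      rw [integral_map (hYm j).aemeasurable hφ.measurable.aestronglyMeasurable,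
        integral_map (hXm j).aemeasurable hφ.measurable.aestronglyMeasurable]
      exact hII j (not_lt.1 hj) φ hφ.measurable hφ ⟨M, hM⟩
  exact integral_comp_le_of_iIndepFun (X := fun ω => ordinalPart z (X ω))
    (fun j => (ho j).comp (hXm j)) (fun j => (ho j).comp (hYm j)) (hXind.comp o ho)
    (hYind.comp o ho) hdom hu.monotone hGX hGY

/-- Proposition 7 iii), addition: under joint independence of the components of `X` and of
`Y`, componentwise expectation dominance (I) together with first-order stochastic dominance
in all ordinal dimensions (II) implies GSD on `pref(ℝ^r)`. -/
theorem stmt16 {Ω : Type*} [MeasurableSpace Ω] (π : Measure Ω) [IsProbabilityMeasure π]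
    (r z : ℕ) (hz : z ≤ r) (X Y : Ω → (Fin r → ℝ))
    (hX : memF π (R1star r) (R2star r z) X) (hY : memF π (R1star r) (R2star r z) Y)
    (hXi : ∀ j, Integrable (fun ω => X ω j) π) (hYi : ∀ j, Integrable (fun ω => Y ω j) π)
    (hXm : ∀ j, Measurable fun ω => X ω j) (hYm : ∀ j, Measurable fun ω => Y ω j)
    (hXind : ProbabilityTheory.iIndepFun
      (fun j ω => X ω j) π)
    (hYind : ProbabilityTheory.iIndepFun
      (fun j ω => Y ω j) π)
    (hI : ∀ j, ∫ ω, Y ω j ∂π ≤ ∫ ω, X ω j ∂π)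
    (hII : ∀ j : Fin r, z ≤ (j : ℕ) →
      ∀ u : ℝ → ℝ, Measurable u → Monotone u → (∃ B, ∀ t, |u t| ≤ B) →
        ∫ ω, u (Y ω j) ∂π ≤ ∫ ω, u (X ω j) ∂π) :
    GSDrel π (R1star r) (R2star r z) X Y :=
  stmt16_general π r z X Y hX hY hXi hYi hXm hYm hXind hYind hI hII

end GSD
end

section
/- Let r ∈ ℕ and consider pref(ℝ^r) with z = 1 (exactly the first dimension cardinal). Let 𝒰_sep be the set of all functions u : ℝ^r → ℝ such that for every fixed (x₂,…,x_r) ∈ ℝ^{r−1} the map x₁ ↦ u(x₁,x₂,…,x_r) is strictly increasing and affine linear, and for every fixed x₁ ∈ ℝ the map (x₂,…,x_r) ↦ u(x₁,x₂,…,x_r) is strictly isotone with respect to the componentwise partial order on ℝ^{r−1} (isotone, and strictly order-preserving on its strict part). Then 𝒰_sep = 𝒰_{pref(ℝ^r)}, the set of all representations of pref(ℝ^r). -/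
open MeasureTheory
open scoped BigOperators

namespace GSD

private lemma additive_mono_linear (g : ℝ → ℝ) (hadd : ∀ a b, g (a + b) = g a + g b)
    (hmono : Monotone g) : ∀ t, g t = g 1 * t := by
  have g0 : g 0 = 0 := by have h := hadd 0 0; rw [add_zero] at h; linarith
  have hq : ∀ q : ℚ, g (q : ℝ) = g 1 * (q : ℝ) := by
    intro q
    have h := map_rat_smul (AddMonoidHom.mk' g hadd) q (1 : ℝ)
    simp only [AddMonoidHom.mk'_apply, Rat.smul_def, mul_one, smul_eq_mul] at h
    rw [h, mul_comm]
  have h1 : 0 ≤ g 1 := by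
    have h := hmono (zero_le_one : (0:ℝ) ≤ 1); rw [g0] at h; exact h
  have claimA : ∀ t, g t ≤ g 1 * t := by
    intro t
    by_contra hlt
    push_neg at hlt
    rcases eq_or_lt_of_le h1 with h | h
    · obtain ⟨q, hq1⟩ := exists_rat_gt t
      have h2 := hmono hq1.le
      rw [hq] at h2
      nlinarith
    · have ht : t < g t / g 1 := by rw [lt_div_iff₀ h]; nlinarith
      obtain ⟨q, hq1, hq2⟩ := exists_rat_btwn ht
      have h3 := hmono hq1.le
      rw [hq] at h3
      have h4 : (q : ℝ) * g 1 < g t := (lt_div_iff₀ h).mp hq2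
      nlinarith
  intro t
  have hneg : g (-t) = - g t := by
    have h := hadd t (-t)
    rw [show t + -t = (0:ℝ) by ring, g0] at h
    linarith
  have hA := claimA t
  have hB := claimA (-t)
  rw [hneg, mul_neg] at hB
  linarith

private theorem prop8_aux (r : ℕ) (i0 : Fin r) (h0 : (i0 : ℕ) = 0) :
    {u : (Fin r → ℝ) → ℝ |
      (∀ x : Fin r → ℝ,
        StrictMono (fun t => u (Function.update x i0 t)) ∧
        ∃ c d : ℝ, ∀ t, u (Function.update x i0 t) = c * t + d) ∧
      (∀ x y : Fin r → ℝ, x i0 = y i0 →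
        (∀ j, j ≠ i0 → y j ≤ x j) →
        (u y ≤ u x ∧ ((∃ j, j ≠ i0 ∧ y j < x j) → u y < u x)))} =
    {u | IsRepresentation (R1star r) (R2star r 1) u} := by
  have hne1 : ∀ j : Fin r, j ≠ i0 → 1 ≤ (j : ℕ) := by
    intro j hj
    by_contra hcon
    push_neg at hcon
    exact hj (Fin.ext (by omega))
  have heq0 : ∀ j : Fin r, (j : ℕ) < 1 → j = i0 := by
    intro j hj
    exact Fin.ext (by omega)
  have hi0lt : ((i0 : ℕ) : ℕ) < 1 := by omega
  ext u
  simp only [Set.mem_setOf_eq]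
  constructor
  · rintro ⟨hA, hB⟩
    choose C D hCD using fun x => (hA x).2
    have hCpos : ∀ x, 0 < C x := by
      intro x
      have h := (hA x).1 (show (0:ℝ) < 1 by norm_num)
      simp only [hCD] at h
      linarith
    have hCeq_le : ∀ x y : Fin r → ℝ, (∀ j, j ≠ i0 → x j ≤ y j) → C x = C y := by
      intro x y hxy
      have key : ∀ t : ℝ, C x * t + D x ≤ C y * t + D y := by
        intro t
        rw [← hCD x t, ← hCD y t]
        refine (hB (Function.update y i0 t) (Function.update x i0 t) (by simp) ?_).1
        intro j hj
        rw [Function.update_of_ne hj, Function.update_of_ne hj]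
        exact hxy j hj
      by_contra hne
      rcases lt_or_gt_of_ne hne with h | h
      · have hpos : 0 < C y - C x := by linarith
        have h2 := key ((D x - D y - 1) / (C y - C x))
        have h3 : (C y - C x) * ((D x - D y - 1) / (C y - C x)) = D x - D y - 1 := by
          field_simp
        nlinarith
      · have hpos : 0 < C x - C y := by linarith
        have h2 := key ((D y - D x + 1) / (C x - C y))
        have h3 : (C x - C y) * ((D y - D x + 1) / (C x - C y)) = D y - D x + 1 := by
          field_simp
        nlinarith
    have hCconst : ∀ x y, C x = C y := by
      intro x y
      have h1 := hCeq_le x (fun j => max (x j) (y j)) (fun j _ => le_max_left _ _)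
      have h2 := hCeq_le y (fun j => max (x j) (y j)) (fun j _ => le_max_right _ _)
      rw [h1, h2]
    have hDval : ∀ x, D x = u (Function.update x i0 0) := by
      intro x
      rw [hCD x 0]
      ring
    have hu_eq : ∀ x : Fin r → ℝ, u x = C x * x i0 + D x := by
      intro x
      have h := hCD x (x i0)
      rwa [Function.update_eq_self] at h
    have hDle : ∀ x y : Fin r → ℝ, (∀ j, j ≠ i0 → x j ≤ y j) → D x ≤ D y := by
      intro x y h
      rw [hDval, hDval]
      refine (hB (Function.update y i0 0) (Function.update x i0 0) (by simp) ?_).1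
      intro j hj
      rw [Function.update_of_ne hj, Function.update_of_ne hj]
      exact h j hj
    have hDlt : ∀ x y : Fin r → ℝ, (∀ j, j ≠ i0 → x j ≤ y j) →
        (∃ j, j ≠ i0 ∧ x j < y j) → D x < D y := by
      rintro x y h ⟨j, hj, hjlt⟩
      rw [hDval, hDval]
      refine (hB (Function.update y i0 0) (Function.update x i0 0) (by simp) ?_).2 ?_
      · intro j' hj'
        rw [Function.update_of_ne hj', Function.update_of_ne hj']
        exact h j' hj'
      · exact ⟨j, hj, by rw [Function.update_of_ne hj, Function.update_of_ne hj]; exact hjlt⟩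
    refine ⟨?_, ?_⟩
    · intro a b hab
      have hab0 : b i0 ≤ a i0 := hab i0
      have hD1 : D b ≤ D a := hDle b a fun j _ => hab j
      have hC := hCconst b a
      have hpa := hCpos a
      refine ⟨by rw [hu_eq a, hu_eq b, hC]; nlinarith, ?_, ?_⟩
      · intro heq j
        by_contra hj
        push_neg at hj
        have hlt : u b < u a := by
          rcases eq_or_ne j i0 with hji | hji
          · have hb0 : b i0 < a i0 := hji ▸ hj
            rw [hu_eq a, hu_eq b, hC]
            nlinarith
          · have hD2 : D b < D a := hDlt b a (fun j' _ => hab j') ⟨j, hji, hj⟩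
            rw [hu_eq a, hu_eq b, hC]
            nlinarith
        linarith [heq.le]
      · intro hba
        have hab' : a = b := funext fun j => le_antisymm (hba j) (hab j)
        rw [hab']
    · rintro a b c d ⟨h1, h2, h3, h4⟩
      have h30 : c i0 - d i0 ≤ a i0 - b i0 := h3 i0 hi0lt
      have hac : ∀ j, j ≠ i0 → c j ≤ a j := fun j hj => (h4 j (hne1 j hj)).2.2
      have hbd : ∀ j, j ≠ i0 → b j ≤ d j := fun j hj => (h4 j (hne1 j hj)).1
      have hDca : D c ≤ D a := hDle c a hac
      have hDbd : D b ≤ D d := hDle b d hbd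
      have hCa : ∀ x, C x = C a := fun x => hCconst x a
      have hpa := hCpos a
      have key : u a - u b - (u c - u d) =
          C a * ((a i0 - b i0) - (c i0 - d i0)) + (D a - D c) + (D d - D b) := by
        rw [hu_eq a, hu_eq b, hu_eq c, hu_eq d, hCa b, hCa c, hCa d]
        ring
      have hprod : 0 ≤ C a * ((a i0 - b i0) - (c i0 - d i0)) :=
        mul_nonneg hpa.le (by linarith)
      refine ⟨by linarith, ?_, ?_⟩
      · intro heq
        have hz1 : C a * ((a i0 - b i0) - (c i0 - d i0)) = 0 := by linarith
        have hz2 : D a = D c := by linarith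
        have hz3 : D d = D b := by linarith
        have hdiff : a i0 - b i0 = c i0 - d i0 := by
          rcases mul_eq_zero.mp hz1 with h | h
          · exact absurd h (ne_of_gt hpa)
          · linarith
        have haceq : ∀ j, j ≠ i0 → a j = c j := by
          intro j hj
          by_contra hne
          have hlt : c j < a j := (hac j hj).lt_of_ne (fun h => hne h.symm)
          exact absurd hz2 (ne_of_gt (hDlt c a hac ⟨j, hj, hlt⟩))
        have hbdeq : ∀ j, j ≠ i0 → b j = d j := by
          intro j hj
          by_contra hne
          have hlt : b j < d j := (hbd j hj).lt_of_ne hne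
          exact absurd hz3.symm (ne_of_lt (hDlt b d hbd ⟨j, hj, hlt⟩))
        refine ⟨h2, h1, ?_, ?_⟩
        · intro j hjlt
          rw [heq0 j hjlt]
          linarith
        · intro j hj1
          have hj : j ≠ i0 := by
            intro hje
            rw [hje, h0] at hj1
            exact absurd hj1 (by norm_num)
          exact ⟨(hbdeq j hj).ge, h1 j, (haceq j hj).le⟩
      · rintro ⟨g1, g2, g3, g4⟩
        have g30 : a i0 - b i0 ≤ c i0 - d i0 := g3 i0 hi0lt
        have haeq : ∀ j, j ≠ i0 → a j = c j := fun j hj =>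
          le_antisymm ((g4 j (hne1 j hj)).2.2) (hac j hj)
        have hbeq : ∀ j, j ≠ i0 → b j = d j := fun j hj =>
          le_antisymm (hbd j hj) ((g4 j (hne1 j hj)).1)
        have hupd : ∀ (v w : Fin r → ℝ), (∀ j, j ≠ i0 → v j = w j) →
            Function.update v i0 0 = Function.update w i0 0 := by
          intro v w hvw
          funext j
          rcases eq_or_ne j i0 with hje | hje
          · rw [hje]; simp
          · rw [Function.update_of_ne hje, Function.update_of_ne hje, hvw j hje]
        have hDac : D a = D c := by rw [hDval, hDval, hupd a c haeq]
        have hDbd2 : D b = D d := by rw [hDval, hDval, hupd b d hbeq]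
        have hdiff : a i0 - b i0 = c i0 - d i0 := le_antisymm g30 h30
        rw [hu_eq a, hu_eq b, hu_eq c, hu_eq d, hCa b, hCa c, hCa d, hDac, hDbd2]
        linear_combination (C a) * hdiff
  · rintro ⟨hu1, hu2⟩
    have hstrict : ∀ x y, R1star r x y → ¬ R1star r y x → u y < u x := by
      intro x y h hn
      obtain ⟨hle, hiff⟩ := hu1 x y h
      rcases eq_or_lt_of_le hle with he | hlt
      · exact absurd (hiff.mp he.symm) hn
      · exact hlt
    have hR1upd : ∀ (x : Fin r → ℝ) (a b : ℝ), b ≤ a →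
        R1star r (Function.update x i0 a) (Function.update x i0 b) := by
      intro x a b hba j
      rcases eq_or_ne j i0 with hje | hje
      · rw [hje]; simpa using hba
      · rw [Function.update_of_ne hje, Function.update_of_ne hje]
    constructor
    · intro x
      have hmono : StrictMono (fun t => u (Function.update x i0 t)) := by
        intro s t hst
        apply hstrict
        · exact hR1upd x t s hst.le
        · intro hcon
          have h := hcon i0
          simp only [Function.update_self] at h
          exact absurd h (not_le.mpr hst)
      refine ⟨hmono, ?_⟩
      set f : ℝ → ℝ := fun t => u (Function.update x i0 t) with hf
      have T : ∀ s t h : ℝ, 0 ≤ h → f (t + h) - f t = f (s + h) - f s := by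
        intro s t h hh
        have mk2 : ∀ a b : ℝ, R2star r 1
            (Function.update x i0 (a + h), Function.update x i0 a)
            (Function.update x i0 (b + h), Function.update x i0 b) := by
          intro a b
          refine ⟨hR1upd x (a + h) a (by linarith), hR1upd x (b + h) b (by linarith), ?_, ?_⟩
          · intro j hj
            rw [heq0 j hj]
            dsimp only
            simp only [Function.update_self]
            linarith
          · intro j hj1
            have hje : j ≠ i0 := by
              intro hje
              rw [hje, h0] at hj1
              exact absurd hj1 (by norm_num)
            dsimp only
            rw [Function.update_of_ne hje, Function.update_of_ne hje,
              Function.update_of_ne hje, Function.update_of_ne hje]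
            exact ⟨le_rfl, le_rfl, le_rfl⟩
        exact (hu2 _ _ _ _ (mk2 t s)).2.mpr (mk2 s t)
      have gadd : ∀ a b : ℝ, (f (a + b) - f 0) = (f a - f 0) + (f b - f 0) := by
        intro a b
        rcases le_or_gt 0 b with hb | hb
        · have h1 := T 0 a b hb
          rw [zero_add] at h1
          linarith
        · have h1 := T 0 (a + b) (-b) (by linarith)
          have h2 := T 0 b (-b) (by linarith)
          rw [zero_add] at h1 h2
          rw [show a + b + -b = a by ring] at h1
          rw [show b + -b = (0:ℝ) by ring] at h2
          linarith
      have gmono : Monotone (fun s => f s - f 0) := by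
        intro p q hpq
        have h : f p ≤ f q := hmono.monotone hpq
        simpa using sub_le_sub_right h (f 0)
      have glin := additive_mono_linear (fun s => f s - f 0) gadd gmono
      refine ⟨f 1 - f 0, f 0, ?_⟩
      intro t
      have h : f t - f 0 = (f 1 - f 0) * t := glin t
      show f t = (f 1 - f 0) * t + f 0
      linarith
    · intro x y hxy0 hxyle
      have hR : R1star r x y := by
        intro j
        rcases eq_or_ne j i0 with hje | hje
        · rw [hje]; exact le_of_eq hxy0.symm
        · exact hxyle j hje
      refine ⟨(hu1 x y hR).1, ?_⟩
      rintro ⟨j, hj, hjlt⟩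
      exact hstrict x y hR (fun hcon => absurd (hcon j) (not_le.mpr hjlt))

/-- Proposition 8: for `z = 1`, the representations of `pref(ℝ^r)` are exactly the functions
that are strictly increasing and affine linear in the first (cardinal) coordinate and strictly
isotone w.r.t. the componentwise order in the remaining (ordinal) coordinates. -/
theorem stmt18 (r : ℕ) (hr : 1 ≤ r) :
    {u : (Fin r → ℝ) → ℝ |
      (∀ x : Fin r → ℝ,
        StrictMono (fun t => u (Function.update x ⟨0, hr⟩ t)) ∧
        ∃ c d : ℝ, ∀ t, u (Function.update x ⟨0, hr⟩ t) = c * t + d) ∧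
      (∀ x y : Fin r → ℝ, x ⟨0, hr⟩ = y ⟨0, hr⟩ →
        (∀ j, j ≠ (⟨0, hr⟩ : Fin r) → y j ≤ x j) →
        (u y ≤ u x ∧ ((∃ j, j ≠ (⟨0, hr⟩ : Fin r) ∧ y j < x j) → u y < u x)))} =
    {u | IsRepresentation (R1star r) (R2star r 1) u} := prop8_aux r ⟨0, hr⟩ rfl

end GSD
end
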